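/- arXiv:1307.0204 — 3 statements merged into one kernel-verified Lean document; each statement's English description precedes it below -/
import Mathlib

section
/- Let T be a P/T calculus term and ⟦−⟧ the compositional translation into P/T nets with boundaries. Then: (i) if T −α/β→ T' in the strong semantics of the P/T calculus, then ⟦T⟧ −α/β→ ⟦T'⟧ under the strong labelled semantics of P/T nets with boundaries; (ii) if ⟦T⟧ −α/β→ N_X for some marked P/T net N_X, then there exists a P/T calculus term T' such that T −α/β→ T' and ⟦T'⟧ = N_X. -/
/-- A P/T net with boundaries `m → n` (well-formedness in `PTNet.Valid`). -/
structure PTNet (m n : ℕ) : Type 1 where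
  P : Type
  T : Type
  pre : T → Multiset P
  post : T → Multiset P
  src : T → Multiset (Fin m)
  tgt : T → Multiset (Fin n)

namespace PTNet

variable {k l m n : ℕ}

/-- Linear extension of `pre` to multisets of transitions. -/
def preM (N : PTNet m n) (U : Multiset N.T) : Multiset N.P := (U.map N.pre).sum
def postM (N : PTNet m n) (U : Multiset N.T) : Multiset N.P := (U.map N.post).sum
def srcM (N : PTNet m n) (U : Multiset N.T) : Multiset (Fin m) := (U.map N.src).sum
def tgtM (N : PTNet m n) (U : Multiset N.T) : Multiset (Fin n) := (U.map N.tgt).sum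

/-- Well-formedness: finiteness and distinct footprints. -/
def Valid (N : PTNet m n) : Prop :=
  Finite N.P ∧ Finite N.T ∧
  ∀ t u : N.T, N.pre t = N.pre u → N.post t = N.post u →
    N.src t = N.src u → N.tgt t = N.tgt u → t = u

/-- Strong firing of P/T nets: `N_X →_U N_Y`. -/
def SFire (N : PTNet m n) (X : Multiset N.P) (U : Multiset N.T)
    (Y : Multiset N.P) : Prop :=
  letI := Classical.decEq N.P
  N.preM U ≤ X ∧ N.postM U ≤ Y ∧ X - N.preM U = Y - N.postM U

/-- Weak (banking) firing of P/T nets: `N_X ⇒_U N_Y`. -/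
def WFire (N : PTNet m n) (X : Multiset N.P) (U : Multiset N.T)
    (Y : Multiset N.P) : Prop :=
  Y + N.preM U = X + N.postM U

/-- Characteristic function `χ : Multiset (Fin k) → ℕ^k`. -/
def chiM {k : ℕ} (M : Multiset (Fin k)) : Fin k → ℕ := fun i => M.count i

/-- Strong labelled semantics of P/T nets with boundaries. -/
def SLts (N : PTNet m n) (X : Multiset N.P) (α : Fin m → ℕ) (β : Fin n → ℕ)
    (Y : Multiset N.P) : Prop :=
  ∃ U : Multiset N.T, N.SFire X U Y ∧ α = chiM (N.srcM U) ∧ β = chiM (N.tgtM U)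

/-- Weak labelled semantics of P/T nets with boundaries. -/
def WLts (N : PTNet m n) (X : Multiset N.P) (α : Fin m → ℕ) (β : Fin n → ℕ)
    (Y : Multiset N.P) : Prop :=
  ∃ U : Multiset N.T, N.WFire X U Y ∧ α = chiM (N.srcM U) ∧ β = chiM (N.tgtM U)

/-- Synchronisation between P/T nets with a common boundary. -/
def Synch (M : PTNet l m) (N : PTNet m n) (U : Multiset M.T)
    (V : Multiset N.T) : Prop :=
  ¬(U = 0 ∧ V = 0) ∧ M.tgtM U = N.srcM V

/-- Minimal synchronisation. -/
def MinSynch (M : PTNet l m) (N : PTNet m n) (U : Multiset M.T)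
    (V : Multiset N.T) : Prop :=
  Synch M N U V ∧
    ∀ U' V', Synch M N U' V' → U' ≤ U → V' ≤ V → U' = U ∧ V' = V

end PTNet
namespace PTNet

variable {k l m n : ℕ}

/-- Footprints of transitions of the composite P/T net. -/
def FootprintPT (M : PTNet l m) (N : PTNet m n) : Type :=
  Multiset (M.P ⊕ N.P) × Multiset (M.P ⊕ N.P) × Multiset (Fin l) × Multiset (Fin n)

def footOf (M : PTNet l m) (N : PTNet m n) (U : Multiset M.T) (V : Multiset N.T) :
    FootprintPT M N :=
  ((M.preM U).map Sum.inl + (N.preM V).map Sum.inr,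
   (M.postM U).map Sum.inl + (N.postM V).map Sum.inr,
   M.srcM U, N.tgtM V)

/-- Combined marking on a disjoint union of places. -/
def mmk {A B : Type} (X : Multiset A) (Y : Multiset B) : Multiset (A ⊕ B) :=
  X.map Sum.inl + Y.map Sum.inr

/-- Composition of P/T nets with boundaries along a common boundary. -/
def comp (M : PTNet l m) (N : PTNet m n) : PTNet l n where
  P := M.P ⊕ N.P
  T := {fp : FootprintPT M N // ∃ U V, MinSynch M N U V ∧ footOf M N U V = fp}
  pre t := t.1.1
  post t := t.1.2.1
  src t := t.1.2.2.1
  tgt t := t.1.2.2.2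

end PTNet
namespace PTNet

variable {k l m n : ℕ}

/-- Tensor product of P/T nets with boundaries. -/
def tensor (M : PTNet k l) (N : PTNet m n) : PTNet (k + m) (l + n) where
  P := M.P ⊕ N.P
  T := M.T ⊕ N.T
  pre := Sum.elim (fun t => (M.pre t).map Sum.inl) (fun t => (N.pre t).map Sum.inr)
  post := Sum.elim (fun t => (M.post t).map Sum.inl) (fun t => (N.post t).map Sum.inr)
  src := Sum.elim (fun t => (M.src t).map (Fin.castAdd m))
    (fun t => (N.src t).map (Fin.natAdd k))
  tgt := Sum.elim (fun t => (M.tgt t).map (Fin.castAdd n))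
    (fun t => (N.tgt t).map (Fin.natAdd l))

end PTNet
/-- Syntax of the P/T calculus. -/
inductive TTerm : Type
  | place (n : ℕ)       -- ⟨n⟩ (buffer with n tokens)
  | iden                -- I
  | tw                  -- X
  | diag                -- Δ
  | codiag              -- ∇
  | bot                 -- ⊥
  | top                 -- ⊤
  | lam                 -- Λ
  | vee                 -- V
  | down                -- ↓
  | up                  -- ↑
  | tens (P Q : TTerm)  -- ⊗
  | seq (P Q : TTerm)   -- ;
  deriving DecidableEq

namespace TTerm

/-- Sorting discipline of the P/T calculus. -/
inductive HasSort : TTerm → ℕ → ℕ → Prop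
  | place (n : ℕ) : HasSort (.place n) 1 1
  | iden : HasSort .iden 1 1
  | tw : HasSort .tw 2 2
  | diag : HasSort .diag 1 2
  | codiag : HasSort .codiag 2 1
  | bot : HasSort .bot 1 0
  | top : HasSort .top 0 1
  | lam : HasSort .lam 1 2
  | vee : HasSort .vee 2 1
  | down : HasSort .down 1 0
  | up : HasSort .up 0 1
  | tens {P Q : TTerm} {k l m n : ℕ} :
      HasSort P k l → HasSort Q m n → HasSort (.tens P Q) (k + m) (l + n)
  | seq {P Q : TTerm} {k n l : ℕ} :
      HasSort P k n → HasSort Q n l → HasSort (.seq P Q) k l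

/-- Basic connectors are the constants of the calculus. -/
def IsBasic : TTerm → Prop
  | .tens _ _ => False
  | .seq _ _ => False
  | _ => True

/-- Strong operational semantics of the P/T calculus. -/
inductive Step : TTerm → List ℕ → List ℕ → TTerm → Prop
  | place {n h k : ℕ} : k ≤ n → Step (.place n) [h] [k] (.place (n + h - k))
  | iden (k : ℕ) : Step .iden [k] [k] .iden
  | tw (h k : ℕ) : Step .tw [h, k] [k, h] .tw
  | bot (k : ℕ) : Step .bot [k] [] .bot
  | top (k : ℕ) : Step .top [] [k] .top
  | diag (k : ℕ) : Step .diag [k] [k, k] .diag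
  | codiag (k : ℕ) : Step .codiag [k, k] [k] .codiag
  | lam (h k : ℕ) : Step .lam [h + k] [h, k] .lam
  | vee (h k : ℕ) : Step .vee [h, k] [h + k] .vee
  | refl {C : TTerm} {k l : ℕ} : IsBasic C → HasSort C k l →
      Step C (List.replicate k 0) (List.replicate l 0) C
  | cut {P Q R S : TTerm} {α β γ : List ℕ} :
      Step P α γ Q → Step R γ β S → Step (.seq P R) α β (.seq Q S)
  | ten {P Q R S : TTerm} {α₁ α₂ β₁ β₂ : List ℕ} :
      Step P α₁ β₁ Q → Step R α₂ β₂ S →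
      Step (.tens P R) (α₁ ++ α₂) (β₁ ++ β₂) (.tens Q S)

/-- Weak operational semantics of the P/T calculus: same rules plus (Weak). -/
inductive Weak : TTerm → List ℕ → List ℕ → TTerm → Prop
  | place {n h k : ℕ} : k ≤ n → Weak (.place n) [h] [k] (.place (n + h - k))
  | iden (k : ℕ) : Weak .iden [k] [k] .iden
  | tw (h k : ℕ) : Weak .tw [h, k] [k, h] .tw
  | bot (k : ℕ) : Weak .bot [k] [] .bot
  | top (k : ℕ) : Weak .top [] [k] .top
  | diag (k : ℕ) : Weak .diag [k] [k, k] .diag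
  | codiag (k : ℕ) : Weak .codiag [k, k] [k] .codiag
  | lam (h k : ℕ) : Weak .lam [h + k] [h, k] .lam
  | vee (h k : ℕ) : Weak .vee [h, k] [h + k] .vee
  | refl {C : TTerm} {k l : ℕ} : IsBasic C → HasSort C k l →
      Weak C (List.replicate k 0) (List.replicate l 0) C
  | cut {P Q R S : TTerm} {α β γ : List ℕ} :
      Weak P α γ Q → Weak R γ β S → Weak (.seq P R) α β (.seq Q S)
  | ten {P Q R S : TTerm} {α₁ α₂ β₁ β₂ : List ℕ} :
      Weak P α₁ β₁ Q → Weak R α₂ β₂ S →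
      Weak (.tens P R) (α₁ ++ α₂) (β₁ ++ β₂) (.tens Q S)
  | weak {P R Q : TTerm} {α₁ α₂ β₁ β₂ : List ℕ} :
      Weak P α₁ β₁ R → Weak R α₂ β₂ Q →
      Weak P (List.zipWith (· + ·) α₁ α₂) (List.zipWith (· + ·) β₁ β₂) Q

end TTerm
/-- Characteristic word `χ(M) ∈ ℕ^k` of a multiset over `Fin k`. -/
def chiMul {k : ℕ} (M : Multiset (Fin k)) : List ℕ :=
  (List.finRange k).map fun i => M.count i

namespace PTNet

/-- Strong labelled semantics of P/T nets with boundaries, with labels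
presented as words over ℕ (via `chiMul`). -/
def SLtsL {m n : ℕ} (N : PTNet m n) (X : Multiset N.P) (a b : List ℕ)
    (Y : Multiset N.P) : Prop :=
  ∃ U : Multiset N.T, N.SFire X U Y ∧ a = chiMul (N.srcM U) ∧ b = chiMul (N.tgtM U)

end PTNet
namespace PTTrans

/-- The net of a buffer `⟨n⟩` (the marking varies with `n`): one place, a
producing transition `t_in = true` and a consuming transition `t_out = false`. -/
def bufNet : PTNet 1 1 where
  P := Unit
  T := Bool
  pre t := match t with | true => 0 | false => {()}
  post t := match t with | true => {()} | false => 0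
  src t := match t with | true => {0} | false => 0
  tgt t := match t with | true => 0 | false => {0}

/-- The net of `I`. -/
def idNet : PTNet 1 1 where
  P := Empty
  T := Unit
  pre _ := 0
  post _ := 0
  src _ := {0}
  tgt _ := {0}

/-- The net of `X`. -/
def twNet : PTNet 2 2 where
  P := Empty
  T := Bool
  pre _ := 0
  post _ := 0
  src t := match t with | true => {0} | false => {1}
  tgt t := match t with | true => {1} | false => {0}

/-- The net of `Δ`. -/
def diagNet : PTNet 1 2 where
  P := Empty
  T := Unit
  pre _ := 0
  post _ := 0
  src _ := {0}
  tgt _ := {0, 1}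

/-- The net of `∇`. -/
def codiagNet : PTNet 2 1 where
  P := Empty
  T := Unit
  pre _ := 0
  post _ := 0
  src _ := {0, 1}
  tgt _ := {0}

/-- The net of `⊥`. -/
def botNet : PTNet 1 0 where
  P := Empty
  T := Unit
  pre _ := 0
  post _ := 0
  src _ := {0}
  tgt _ := 0

/-- The net of `⊤`. -/
def topNet : PTNet 0 1 where
  P := Empty
  T := Unit
  pre _ := 0
  post _ := 0
  src _ := 0
  tgt _ := {0}

/-- The net of `Λ`. -/
def lamNet : PTNet 1 2 where
  P := Empty
  T := Bool
  pre _ := 0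
  post _ := 0
  src _ := {0}
  tgt t := match t with | true => {0} | false => {1}

/-- The net of `V`. -/
def veeNet : PTNet 2 1 where
  P := Empty
  T := Bool
  pre _ := 0
  post _ := 0
  src t := match t with | true => {0} | false => {1}
  tgt _ := {0}

/-- The net of `↓`. -/
def downNet : PTNet 1 0 where
  P := Empty
  T := Empty
  pre _ := 0
  post _ := 0
  src _ := 0
  tgt _ := 0

/-- The net of `↑`. -/
def upNet : PTNet 0 1 where
  P := Empty
  T := Empty
  pre _ := 0
  post _ := 0
  src _ := 0
  tgt _ := 0

/-- The compositional translation `⟦−⟧` from P/T calculus terms to marked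
P/T nets with boundaries: `Sem T k l N X` means `⟦T⟧ = N_X : k → l`. -/
inductive Sem : ∀ (T : TTerm) (k l : ℕ) (N : PTNet k l), Multiset N.P → Prop
  | place (n : ℕ) : Sem (.place n) 1 1 bufNet (Multiset.replicate n ())
  | iden : Sem .iden 1 1 idNet 0
  | tw : Sem .tw 2 2 twNet 0
  | diag : Sem .diag 1 2 diagNet 0
  | codiag : Sem .codiag 2 1 codiagNet 0
  | bot : Sem .bot 1 0 botNet 0
  | top : Sem .top 0 1 topNet 0
  | lam : Sem .lam 1 2 lamNet 0
  | vee : Sem .vee 2 1 veeNet 0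
  | down : Sem .down 1 0 downNet 0
  | up : Sem .up 0 1 upNet 0
  | seq {P R : TTerm} {k n l : ℕ} {M : PTNet k n} {N : PTNet n l}
      {X : Multiset M.P} {Y : Multiset N.P} :
      Sem P k n M X → Sem R n l N Y →
      Sem (.seq P R) k l (M.comp N) (PTNet.mmk X Y)
  | tens {P R : TTerm} {k l m n : ℕ} {M : PTNet k l} {N : PTNet m n}
      {X : Multiset M.P} {Y : Multiset N.P} :
      Sem P k l M X → Sem R m n N Y →
      Sem (.tens P R) (k + m) (l + n) (M.tensor N) (PTNet.mmk X Y)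

end PTTrans

/-!
Both directions are proved by induction, on the derivation of the term transition for (i) and on
the translation for (ii). Strong firing is used in the subtraction-free form
`X = R + pre U`, `Y = R + post U`, so that markings and transition multisets of a tensor or a
composite net split along the disjoint sum of places. For the basic connectors one computes the
labels of all multisets of transitions. For sequential composition, every pair `(U, V)` of
transition multisets agreeing on the common boundary is a sum of minimal synchronisations, hence
is fired by a multiset of transitions of the composite net; conversely every transition of the
composite is such a pair.
-/

open Multiset

namespace Multiset

theorem exists_iff_exists_replicate {α : Type*} {a : α} (ha : ∀ x, x = a)
    {p : Multiset α → Prop} : (∃ U, p U) ↔ ∃ c, p (replicate c a) :=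
  ⟨fun ⟨U, hU⟩ => ⟨card U, by rwa [← eq_replicate_of_mem fun x _ => ha x]⟩,
    fun ⟨_, h⟩ => ⟨_, h⟩⟩

theorem exists_iff_exists_replicate_add_replicate {α : Type*} {a b : α}
    (hab : ∀ x, x = a ∨ x = b) (hne : a ≠ b) {p : Multiset α → Prop} :
    (∃ U, p U) ↔ ∃ c d, p (replicate c a + replicate d b) := by
  classical
  refine ⟨fun ⟨U, hU⟩ => ⟨U.count a, U.count b, ?_⟩, fun ⟨_, _, h⟩ => ⟨_, h⟩⟩
  convert hU
  ext x
  rcases hab x with rfl | rfl <;> simp [count_replicate, hne, hne.symm]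

theorem exists_iff_of_isEmpty {α : Type*} [IsEmpty α] {p : Multiset α → Prop} :
    (∃ U, p U) ↔ p 0 :=
  ⟨fun ⟨U, hU⟩ => Subsingleton.elim U 0 ▸ hU, fun h => ⟨0, h⟩⟩

theorem eq_zero_of_isEmpty {α : Type*} (h : IsEmpty α) (s : Multiset α) : s = 0 :=
  eq_zero_of_forall_notMem fun a _ => h.elim a

@[simp]
theorem filterMap_const_none {α β : Type*} (s : Multiset α) :
    filterMap (fun _ => (none : Option β)) s = 0 :=
  eq_zero_of_forall_notMem (by simp [mem_filterMap])

theorem sum_map_map_eq_map_sum {ι α β : Type*} (f : α → β) (g : ι → Multiset α)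
    (s : Multiset ι) :
    (s.map fun i => (g i).map f).sum = ((s.map g).sum).map f := by
  induction s using Multiset.induction_on <;> simp [*]

theorem card_add_card_pos {α β : Type*} {s : Multiset α} {t : Multiset β}
    (h : ¬(s = 0 ∧ t = 0)) : 0 < card s + card t := by
  simp only [← card_eq_zero] at h; omega

end Multiset

theorem chiMul_injective {k : ℕ} : Function.Injective (chiMul : Multiset (Fin k) → List ℕ) :=
  fun _ _ h => Multiset.ext.2 fun i => List.map_inj_left.1 h i (List.mem_finRange i)

theorem chiMul_zero (k : ℕ) : chiMul (0 : Multiset (Fin k)) = List.replicate k 0 := by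
  simp [chiMul]

theorem chiMul_append {k m : ℕ} (A : Multiset (Fin k)) (B : Multiset (Fin m)) :
    chiMul (A.map (Fin.castAdd m) + B.map (Fin.natAdd k)) = chiMul A ++ chiMul B := by
  classical
  simp only [chiMul, ← List.ofFn_eq_map]
  rw [List.ofFn_add]
  congr 1 <;> refine congrArg List.ofFn (funext fun i => ?_)
  · have hB : count (Fin.castAdd m i) (B.map (Fin.natAdd k)) = 0 :=
      count_eq_zero.2 (by simp [Fin.ext_iff]; omega)
    change count (Fin.castAdd m i) _ = _
    rw [count_add, hB, add_zero]
    exact count_map_eq_count' _ _ (Fin.castAdd_injective k m) i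
  · have hA : count (Fin.natAdd k i) (A.map (Fin.castAdd m)) = 0 :=
      count_eq_zero.2 (by simp [Fin.ext_iff]; omega)
    rw [count_add, hA, zero_add]
    exact count_map_eq_count' _ _ (Fin.natAdd_injective m k) i

namespace PTNet

variable {k l m n : ℕ}

section DisjointSum

variable {A B : Type}

theorem mmk_add (X X' : Multiset A) (Y Y' : Multiset B) :
    mmk (X + X') (Y + Y') = mmk X Y + mmk X' Y' := by
  simp only [mmk, map_add]; abel

theorem mmk_inj {X X' : Multiset A} {Y Y' : Multiset B} :
    mmk X Y = mmk X' Y' ↔ X = X' ∧ Y = Y' := by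
  refine ⟨fun h => ⟨?_, ?_⟩, fun ⟨rfl, rfl⟩ => rfl⟩
  · simpa [mmk, filterMap_map, Function.comp_def] using congrArg (filterMap Sum.getLeft?) h
  · simpa [mmk, filterMap_map, Function.comp_def] using congrArg (filterMap Sum.getRight?) h

theorem exists_eq_mmk (Z : Multiset (A ⊕ B)) : ∃ X Y, Z = mmk X Y := by
  induction Z using Multiset.induction_on with
  | empty => exact ⟨0, 0, rfl⟩
  | cons z Z ih =>
    obtain ⟨X, Y, rfl⟩ := ih
    rcases z with a | b
    · exact ⟨a ::ₘ X, Y, by simp [mmk]⟩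
    · exact ⟨X, b ::ₘ Y, by simp [mmk]⟩

theorem exists_add_mmk_iff {X p p' : Multiset A} {Y q q' : Multiset B} {Z : Multiset (A ⊕ B)} :
    (∃ R, mmk X Y = R + mmk p q ∧ Z = R + mmk p' q') ↔
      ∃ Z₁ Z₂, Z = mmk Z₁ Z₂ ∧ (∃ R₁, X = R₁ + p ∧ Z₁ = R₁ + p') ∧
        (∃ R₂, Y = R₂ + q ∧ Z₂ = R₂ + q') := by
  constructor
  · rintro ⟨R, hX, rfl⟩
    obtain ⟨R₁, R₂, rfl⟩ := exists_eq_mmk R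
    rw [← mmk_add, mmk_inj] at hX
    exact ⟨_, _, (mmk_add ..).symm, ⟨R₁, hX.1, rfl⟩, ⟨R₂, hX.2, rfl⟩⟩
  · rintro ⟨Z₁, Z₂, rfl, ⟨R₁, rfl, rfl⟩, ⟨R₂, rfl, rfl⟩⟩
    exact ⟨mmk R₁ R₂, mmk_add .., mmk_add ..⟩

theorem sum_map_elim_mmk {A B C D E : Type} (f : A → Multiset C) (g : B → Multiset D)
    (i : C → E) (j : D → E) (U : Multiset A) (V : Multiset B) :
    ((mmk U V).map (Sum.elim (fun a => (f a).map i) (fun b => (g b).map j))).sum =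
      ((U.map f).sum).map i + ((V.map g).sum).map j := by
  simp [mmk, Function.comp_def, Multiset.sum_map_map_eq_map_sum]

end DisjointSum

section LinearExtension

variable (N : PTNet m n) (U V : Multiset N.T)

@[simp] theorem preM_zero : N.preM 0 = 0 := rfl
@[simp] theorem postM_zero : N.postM 0 = 0 := rfl
@[simp] theorem srcM_zero : N.srcM 0 = 0 := rfl
@[simp] theorem tgtM_zero : N.tgtM 0 = 0 := rfl

@[simp] theorem preM_add : N.preM (U + V) = N.preM U + N.preM V := by simp [preM]
@[simp] theorem postM_add : N.postM (U + V) = N.postM U + N.postM V := by simp [postM]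
@[simp] theorem srcM_add : N.srcM (U + V) = N.srcM U + N.srcM V := by simp [srcM]
@[simp] theorem tgtM_add : N.tgtM (U + V) = N.tgtM U + N.tgtM V := by simp [tgtM]

@[simp] theorem preM_singleton (t : N.T) : N.preM {t} = N.pre t := by simp [preM]
@[simp] theorem postM_singleton (t : N.T) : N.postM {t} = N.post t := by simp [postM]
@[simp] theorem srcM_singleton (t : N.T) : N.srcM {t} = N.src t := by simp [srcM]
@[simp] theorem tgtM_singleton (t : N.T) : N.tgtM {t} = N.tgt t := by simp [tgtM]

@[simp] theorem srcM_replicate (c : ℕ) (t : N.T) : N.srcM (replicate c t) = c • N.src t := by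
  simp [srcM]
@[simp] theorem tgtM_replicate (c : ℕ) (t : N.T) : N.tgtM (replicate c t) = c • N.tgt t := by
  simp [tgtM]

end LinearExtension

theorem sFire_iff {N : PTNet m n} {X Y : Multiset N.P} {U : Multiset N.T} :
    N.SFire X U Y ↔ ∃ R, X = R + N.preM U ∧ Y = R + N.postM U := by
  let := Classical.decEq N.P
  constructor
  · rintro ⟨hX, hY, hR⟩
    refine ⟨X - N.preM U, (tsub_add_cancel_of_le hX).symm, ?_⟩
    rw [hR, tsub_add_cancel_of_le hY]
  · rintro ⟨R, rfl, rfl⟩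
    exact ⟨le_add_self, le_add_self, by rw [add_tsub_cancel_right, add_tsub_cancel_right]⟩

theorem sLtsL_zero (N : PTNet m n) (X : Multiset N.P) :
    N.SLtsL X (List.replicate m 0) (List.replicate n 0) X :=
  ⟨0, sFire_iff.2 ⟨X, by simp, by simp⟩, (chiMul_zero m).symm, (chiMul_zero n).symm⟩

section TensorFootprint

variable (M : PTNet k l) (N : PTNet m n) (U : Multiset M.T) (V : Multiset N.T)

theorem tensor_preM : (M.tensor N).preM (mmk U V) = mmk (M.preM U) (N.preM V) :=
  sum_map_elim_mmk ..

theorem tensor_postM : (M.tensor N).postM (mmk U V) = mmk (M.postM U) (N.postM V) :=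
  sum_map_elim_mmk ..

theorem tensor_srcM : (M.tensor N).srcM (mmk U V) =
    (M.srcM U).map (Fin.castAdd m) + (N.srcM V).map (Fin.natAdd k) :=
  sum_map_elim_mmk ..

theorem tensor_tgtM : (M.tensor N).tgtM (mmk U V) =
    (M.tgtM U).map (Fin.castAdd n) + (N.tgtM V).map (Fin.natAdd l) :=
  sum_map_elim_mmk ..

end TensorFootprint

section Tensor

variable {M : PTNet k l} {N : PTNet m n} {X : Multiset M.P} {Y : Multiset N.P}

theorem tensor_sFire_iff {U : Multiset M.T} {V : Multiset N.T}
    {Z : Multiset (M.tensor N).P} :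
    (M.tensor N).SFire (mmk X Y) (mmk U V) Z ↔
      ∃ Z₁ Z₂, Z = mmk Z₁ Z₂ ∧ M.SFire X U Z₁ ∧ N.SFire Y V Z₂ := by
  simp only [sFire_iff]
  refine sFire_iff.trans ?_
  rw [tensor_preM, tensor_postM]
  exact exists_add_mmk_iff

theorem tensor_sLtsL_iff {α β : List ℕ} {Z : Multiset (M.tensor N).P} :
    (M.tensor N).SLtsL (mmk X Y) α β Z ↔
      ∃ α₁ α₂ β₁ β₂ Z₁ Z₂, α = α₁ ++ α₂ ∧ β = β₁ ++ β₂ ∧ Z = mmk Z₁ Z₂ ∧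
        M.SLtsL X α₁ β₁ Z₁ ∧ N.SLtsL Y α₂ β₂ Z₂ := by
  constructor
  · rintro ⟨W, hW, rfl, rfl⟩
    obtain ⟨U, V, rfl⟩ := exists_eq_mmk W
    obtain ⟨Z₁, Z₂, rfl, hU, hV⟩ := tensor_sFire_iff.1 hW
    exact ⟨_, _, _, _, Z₁, Z₂, by rw [tensor_srcM, chiMul_append],
      by rw [tensor_tgtM, chiMul_append], rfl, ⟨U, hU, rfl, rfl⟩, ⟨V, hV, rfl, rfl⟩⟩
  · rintro ⟨_, _, _, _, Z₁, Z₂, rfl, rfl, rfl, ⟨U, hU, rfl, rfl⟩, ⟨V, hV, rfl, rfl⟩⟩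
    exact ⟨mmk U V, tensor_sFire_iff.2 ⟨Z₁, Z₂, rfl, hU, hV⟩,
      by rw [tensor_srcM, chiMul_append], by rw [tensor_tgtM, chiMul_append]⟩

end Tensor

section Composition

variable {M : PTNet l m} {N : PTNet m n}

/-- `W` has the footprint of firing `U` in `M` alongside `V` in `N`. -/
def Realizes (W : Multiset (M.comp N).T) (U : Multiset M.T) (V : Multiset N.T) : Prop :=
  (M.comp N).preM W = mmk (M.preM U) (N.preM V) ∧
    (M.comp N).postM W = mmk (M.postM U) (N.postM V) ∧
    (M.comp N).srcM W = M.srcM U ∧ (M.comp N).tgtM W = N.tgtM V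

theorem realizes_zero : Realizes (0 : Multiset (M.comp N).T) 0 0 :=
  ⟨rfl, rfl, rfl, rfl⟩

theorem Realizes.add {W W' : Multiset (M.comp N).T} {U U' : Multiset M.T} {V V' : Multiset N.T}
    (h : Realizes W U V) (h' : Realizes W' U' V') : Realizes (W + W') (U + U') (V + V') := by
  obtain ⟨h₁, h₂, h₃, h₄⟩ := h
  obtain ⟨h₁', h₂', h₃', h₄'⟩ := h'
  refine ⟨?_, ?_, ?_, ?_⟩
  · rw [preM_add, h₁, h₁', preM_add, preM_add]; exact (mmk_add ..).symm
  · rw [postM_add, h₂, h₂', postM_add, postM_add]; exact (mmk_add ..).symm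
  · rw [srcM_add, h₃, h₃', srcM_add]
  · rw [tgtM_add, h₄, h₄', tgtM_add]

theorem realizes_singleton {U : Multiset M.T} {V : Multiset N.T} (h : MinSynch M N U V) :
    Realizes ({⟨footOf M N U V, U, V, h, rfl⟩} : Multiset (M.comp N).T) U V :=
  ⟨preM_singleton .., postM_singleton .., srcM_singleton .., tgtM_singleton ..⟩

theorem exists_realizes (W : Multiset (M.comp N).T) :
    ∃ U V, M.tgtM U = N.srcM V ∧ Realizes W U V := by
  induction W using Multiset.induction_on with
  | empty => exact ⟨0, 0, rfl, realizes_zero⟩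
  | cons t W ih =>
    obtain ⟨_, U, V, h, rfl⟩ := t
    obtain ⟨U', V', h', hW⟩ := ih
    exact ⟨U + U', V + V', by rw [tgtM_add, srcM_add, h.1.2, h'],
      (realizes_singleton h).add hW⟩

theorem exists_realizes_of_tgtM_eq_srcM {U : Multiset M.T} {V : Multiset N.T}
    (h : M.tgtM U = N.srcM V) : ∃ W, Realizes W U V := by
  -- A non-minimal synchronisation contains a smaller one `(U₁, V₁)`; the remainder `(U₂, V₂)`
  -- again agrees on the boundary, and both pairs are strictly smaller.
  induction hc : card U + card V using Nat.strong_induction_on generalizing U V with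
  | _ c ih =>
  by_cases h0 : U = 0 ∧ V = 0
  · obtain ⟨rfl, rfl⟩ := h0
    exact ⟨0, realizes_zero⟩
  by_cases hmin : MinSynch M N U V
  · exact ⟨_, realizes_singleton hmin⟩
  rw [MinSynch] at hmin
  push Not at hmin
  obtain ⟨U₁, V₁, hs₁, hU, hV, hne⟩ := hmin ⟨h0, h⟩
  obtain ⟨U₂, rfl⟩ := exists_add_of_le hU
  obtain ⟨V₂, rfl⟩ := exists_add_of_le hV
  have h₂ : M.tgtM U₂ = N.srcM V₂ := by
    rw [tgtM_add, srcM_add, hs₁.2] at h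
    exact add_left_cancel h
  have hpos₁ := card_add_card_pos hs₁.1
  have hpos₂ := card_add_card_pos (s := U₂) (t := V₂) (by simpa using hne)
  simp only [card_add] at hc
  obtain ⟨W₁, hW₁⟩ := ih _ (by omega) hs₁.2 rfl
  obtain ⟨W₂, hW₂⟩ := ih _ (by omega) h₂ rfl
  exact ⟨W₁ + W₂, hW₁.add hW₂⟩

theorem Realizes.sFire_iff {W : Multiset (M.comp N).T} {U : Multiset M.T} {V : Multiset N.T}
    (hW : Realizes W U V) {X : Multiset M.P} {Y : Multiset N.P} {Z : Multiset (M.comp N).P} :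
    (M.comp N).SFire (mmk X Y) W Z ↔
      ∃ Z₁ Z₂, Z = mmk Z₁ Z₂ ∧ M.SFire X U Z₁ ∧ N.SFire Y V Z₂ := by
  simp only [PTNet.sFire_iff]
  refine PTNet.sFire_iff.trans ?_
  rw [hW.1, hW.2.1]
  exact exists_add_mmk_iff

theorem comp_sLtsL_iff {X : Multiset M.P} {Y : Multiset N.P} {α β : List ℕ}
    {Z : Multiset (M.comp N).P} :
    (M.comp N).SLtsL (mmk X Y) α β Z ↔
      ∃ γ Z₁ Z₂, Z = mmk Z₁ Z₂ ∧ M.SLtsL X α γ Z₁ ∧ N.SLtsL Y γ β Z₂ := by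
  constructor
  · rintro ⟨W, hfire, rfl, rfl⟩
    obtain ⟨U, V, hUV, hW⟩ := exists_realizes W
    obtain ⟨Z₁, Z₂, rfl, hU, hV⟩ := hW.sFire_iff.1 hfire
    exact ⟨_, Z₁, Z₂, rfl, ⟨U, hU, by rw [hW.2.2.1], rfl⟩,
      ⟨V, hV, by rw [hUV], by rw [hW.2.2.2]⟩⟩
  · rintro ⟨γ, Z₁, Z₂, rfl, ⟨U, hU, rfl, rfl⟩, ⟨V, hV, hUV, rfl⟩⟩
    obtain ⟨W, hW⟩ := exists_realizes_of_tgtM_eq_srcM (chiMul_injective hUV)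
    exact ⟨W, hW.sFire_iff.2 ⟨Z₁, Z₂, rfl, hU, hV⟩, by rw [hW.2.2.1], by rw [hW.2.2.2]⟩

end Composition

section Placeless

variable {N : PTNet m n} {X Y : Multiset N.P} {α β : List ℕ}

theorem sLtsL_iff_of_isEmpty (hP : IsEmpty N.P) :
    N.SLtsL X α β Y ↔ ∃ U, α = chiMul (N.srcM U) ∧ β = chiMul (N.tgtM U) := by
  have hzero := eq_zero_of_isEmpty hP
  simp [SLtsL, sFire_iff, hzero X, hzero Y, hzero (N.preM _), hzero (N.postM _)]

theorem sLtsL_iff_of_isEmpty_of_isEmpty (hP : IsEmpty N.P) (hT : IsEmpty N.T) :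
    N.SLtsL X α β Y ↔ α = List.replicate m 0 ∧ β = List.replicate n 0 := by
  rw [sLtsL_iff_of_isEmpty hP, exists_iff_of_isEmpty, srcM_zero, tgtM_zero, chiMul_zero,
    chiMul_zero]

theorem sLtsL_iff_of_forall_eq (hP : IsEmpty N.P) {t : N.T} (ht : ∀ u, u = t) :
    N.SLtsL X α β Y ↔ ∃ c : ℕ, α = chiMul (c • N.src t) ∧ β = chiMul (c • N.tgt t) := by
  rw [sLtsL_iff_of_isEmpty hP, exists_iff_exists_replicate ht]
  simp only [srcM_replicate, tgtM_replicate]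

theorem sLtsL_iff_of_forall_eq_or_eq (hP : IsEmpty N.P) {t₁ t₂ : N.T}
    (ht : ∀ u, u = t₁ ∨ u = t₂) (hne : t₁ ≠ t₂) :
    N.SLtsL X α β Y ↔ ∃ c d : ℕ, α = chiMul (c • N.src t₁ + d • N.src t₂) ∧
      β = chiMul (c • N.tgt t₁ + d • N.tgt t₂) := by
  rw [sLtsL_iff_of_isEmpty hP, exists_iff_exists_replicate_add_replicate ht hne]
  simp only [srcM_add, tgtM_add, srcM_replicate, tgtM_replicate]

end Placeless

end PTNet

namespace TTerm

theorem HasSort.unique {T : TTerm} {k l k' l' : ℕ} (h : HasSort T k l) (h' : HasSort T k' l') :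
    k = k' ∧ l = l' := by
  induction h generalizing k' l' with
  | tens _ _ ih₁ ih₂ =>
    cases h' with
    | tens h₁ h₂ =>
      obtain ⟨rfl, rfl⟩ := ih₁ h₁
      obtain ⟨rfl, rfl⟩ := ih₂ h₂
      exact ⟨rfl, rfl⟩
  | seq _ _ ih₁ ih₂ =>
    cases h' with
    | seq h₁ h₂ =>
      obtain ⟨rfl, rfl⟩ := ih₁ h₁
      exact ⟨rfl, (ih₂ h₂).2⟩
  | _ => cases h'; exact ⟨rfl, rfl⟩

end TTerm

namespace PTTrans

open PTNet TTerm

-- `Y` is typed over `Unit` rather than `bufNet.P`, so that the goal stays well typed for `simp`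
-- once `bufNet` is unfolded.
theorem bufNet_sLtsL_iff {n : ℕ} {α β : List ℕ} {Y : Multiset Unit} :
    bufNet.SLtsL (replicate n ()) α β Y ↔
      ∃ h k, k ≤ n ∧ α = [h] ∧ β = [k] ∧ Y = replicate (n + h - k) () := by
  dsimp only [SLtsL, bufNet]
  rw [exists_iff_exists_replicate_add_replicate Bool.eq_false_or_eq_true Bool.noConfusion]
  simp only [sFire_iff, preM, postM, srcM, tgtM]
  simp [chiMul, List.finRange_succ, nsmul_singleton]
  simp_rw [exists_iff_exists_replicate (a := ()) fun _ => rfl, ← replicate_add,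
    (replicate_left_injective ()).eq_iff]
  constructor
  · rintro ⟨c, d, ⟨r, rfl, rfl⟩, rfl, rfl⟩
    exact ⟨c, d, by omega, rfl, rfl, by congr 1; omega⟩
  · rintro ⟨h, k, hk, rfl, rfl, rfl⟩
    exact ⟨h, k, ⟨n - k, by omega, by congr 1; omega⟩, rfl, rfl⟩

theorem idNet_sLtsL_iff {X Y : Multiset idNet.P} {α β : List ℕ} :
    idNet.SLtsL X α β Y ↔ ∃ k, α = [k] ∧ β = [k] := by
  refine (sLtsL_iff_of_forall_eq ⟨Empty.elim⟩ (t := ()) fun _ => rfl).trans ?_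
  simp [idNet, chiMul, List.finRange_succ, count_singleton]

theorem diagNet_sLtsL_iff {X Y : Multiset diagNet.P} {α β : List ℕ} :
    diagNet.SLtsL X α β Y ↔ ∃ k, α = [k] ∧ β = [k, k] := by
  refine (sLtsL_iff_of_forall_eq ⟨Empty.elim⟩ (t := ()) fun _ => rfl).trans ?_
  simp [diagNet, chiMul, List.finRange_succ, count_singleton]

theorem codiagNet_sLtsL_iff {X Y : Multiset codiagNet.P} {α β : List ℕ} :
    codiagNet.SLtsL X α β Y ↔ ∃ k, α = [k, k] ∧ β = [k] := by
  refine (sLtsL_iff_of_forall_eq ⟨Empty.elim⟩ (t := ()) fun _ => rfl).trans ?_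
  simp [codiagNet, chiMul, List.finRange_succ, count_singleton]

theorem botNet_sLtsL_iff {X Y : Multiset botNet.P} {α β : List ℕ} :
    botNet.SLtsL X α β Y ↔ ∃ k, α = [k] ∧ β = [] := by
  refine (sLtsL_iff_of_forall_eq ⟨Empty.elim⟩ (t := ()) fun _ => rfl).trans ?_
  simp [botNet, chiMul, List.finRange_succ, count_singleton]

theorem topNet_sLtsL_iff {X Y : Multiset topNet.P} {α β : List ℕ} :
    topNet.SLtsL X α β Y ↔ ∃ k, α = [] ∧ β = [k] := by
  refine (sLtsL_iff_of_forall_eq ⟨Empty.elim⟩ (t := ()) fun _ => rfl).trans ?_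
  simp [topNet, chiMul, List.finRange_succ, count_singleton]

theorem twNet_sLtsL_iff {X Y : Multiset twNet.P} {α β : List ℕ} :
    twNet.SLtsL X α β Y ↔ ∃ h k, α = [h, k] ∧ β = [k, h] := by
  refine (sLtsL_iff_of_forall_eq_or_eq ⟨Empty.elim⟩ (t₁ := true) (t₂ := false)
    Bool.eq_false_or_eq_true Bool.noConfusion).trans ?_
  simp [twNet, chiMul, List.finRange_succ, count_singleton]

theorem lamNet_sLtsL_iff {X Y : Multiset lamNet.P} {α β : List ℕ} :
    lamNet.SLtsL X α β Y ↔ ∃ h k, α = [h + k] ∧ β = [h, k] := by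
  refine (sLtsL_iff_of_forall_eq_or_eq ⟨Empty.elim⟩ (t₁ := true) (t₂ := false)
    Bool.eq_false_or_eq_true Bool.noConfusion).trans ?_
  simp [lamNet, chiMul, List.finRange_succ, count_singleton]

theorem veeNet_sLtsL_iff {X Y : Multiset veeNet.P} {α β : List ℕ} :
    veeNet.SLtsL X α β Y ↔ ∃ h k, α = [h, k] ∧ β = [h + k] := by
  refine (sLtsL_iff_of_forall_eq_or_eq ⟨Empty.elim⟩ (t₁ := true) (t₂ := false)
    Bool.eq_false_or_eq_true Bool.noConfusion).trans ?_
  simp [veeNet, chiMul, List.finRange_succ, count_singleton]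

theorem downNet_sLtsL_iff {X Y : Multiset downNet.P} {α β : List ℕ} :
    downNet.SLtsL X α β Y ↔ α = [0] ∧ β = [] :=
  sLtsL_iff_of_isEmpty_of_isEmpty ⟨Empty.elim⟩ ⟨Empty.elim⟩

theorem upNet_sLtsL_iff {X Y : Multiset upNet.P} {α β : List ℕ} :
    upNet.SLtsL X α β Y ↔ α = [] ∧ β = [0] :=
  sLtsL_iff_of_isEmpty_of_isEmpty ⟨Empty.elim⟩ ⟨Empty.elim⟩

theorem Sem.hasSort {T : TTerm} {k l : ℕ} {N : PTNet k l} {X : Multiset N.P}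
    (h : Sem T k l N X) : HasSort T k l := by
  induction h <;> constructor <;> assumption

theorem exists_sLtsL_of_step {T T' : TTerm} {α β : List ℕ} (hstep : Step T α β T')
    {k l : ℕ} {N : PTNet k l} {X : Multiset N.P} (hs : Sem T k l N X) :
    ∃ X', Sem T' k l N X' ∧ N.SLtsL X α β X' := by
  induction hstep generalizing k l N X with
  | place hk => cases hs; exact ⟨_, .place _, bufNet_sLtsL_iff.2 ⟨_, _, hk, rfl, rfl, rfl⟩⟩
  | iden k => cases hs; exact ⟨0, .iden, idNet_sLtsL_iff.2 ⟨k, rfl, rfl⟩⟩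
  | tw h k => cases hs; exact ⟨0, .tw, twNet_sLtsL_iff.2 ⟨h, k, rfl, rfl⟩⟩
  | bot k => cases hs; exact ⟨0, .bot, botNet_sLtsL_iff.2 ⟨k, rfl, rfl⟩⟩
  | top k => cases hs; exact ⟨0, .top, topNet_sLtsL_iff.2 ⟨k, rfl, rfl⟩⟩
  | diag k => cases hs; exact ⟨0, .diag, diagNet_sLtsL_iff.2 ⟨k, rfl, rfl⟩⟩
  | codiag k => cases hs; exact ⟨0, .codiag, codiagNet_sLtsL_iff.2 ⟨k, rfl, rfl⟩⟩
  | lam h k => cases hs; exact ⟨0, .lam, lamNet_sLtsL_iff.2 ⟨h, k, rfl, rfl⟩⟩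
  | vee h k => cases hs; exact ⟨0, .vee, veeNet_sLtsL_iff.2 ⟨h, k, rfl, rfl⟩⟩
  | refl _ hsort =>
    obtain ⟨rfl, rfl⟩ := hsort.unique hs.hasSort
    exact ⟨X, hs, sLtsL_zero N X⟩
  | cut _ _ ih₁ ih₂ =>
    cases hs with
    | seq hs₁ hs₂ =>
      obtain ⟨X₁, hs₁', h₁⟩ := ih₁ hs₁
      obtain ⟨X₂, hs₂', h₂⟩ := ih₂ hs₂
      exact ⟨_, .seq hs₁' hs₂', comp_sLtsL_iff.2 ⟨_, X₁, X₂, rfl, h₁, h₂⟩⟩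
  | ten _ _ ih₁ ih₂ =>
    cases hs with
    | tens hs₁ hs₂ =>
      obtain ⟨X₁, hs₁', h₁⟩ := ih₁ hs₁
      obtain ⟨X₂, hs₂', h₂⟩ := ih₂ hs₂
      exact ⟨_, .tens hs₁' hs₂',
        tensor_sLtsL_iff.2 ⟨_, _, _, _, X₁, X₂, rfl, rfl, rfl, h₁, h₂⟩⟩

theorem exists_step_of_sLtsL_of_isBasic {C : TTerm} (hC : IsBasic C) {k l : ℕ} {N : PTNet k l}
    {X : Multiset N.P} (hs : Sem C k l N X) {α β : List ℕ} {Y : Multiset N.P}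
    (hfire : N.SLtsL X α β Y) : ∃ T', Step C α β T' ∧ Sem T' k l N Y := by
  cases hs with
  | place n =>
    obtain ⟨h, k, hk, rfl, rfl, rfl⟩ := bufNet_sLtsL_iff.1 hfire
    exact ⟨_, .place hk, .place _⟩
  | iden =>
    obtain ⟨k, rfl, rfl⟩ := idNet_sLtsL_iff.1 hfire
    exact ⟨_, .iden k, eq_zero_of_isEmpty ⟨Empty.elim⟩ Y ▸ .iden⟩
  | tw =>
    obtain ⟨h, k, rfl, rfl⟩ := twNet_sLtsL_iff.1 hfire
    exact ⟨_, .tw h k, eq_zero_of_isEmpty ⟨Empty.elim⟩ Y ▸ .tw⟩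
  | diag =>
    obtain ⟨k, rfl, rfl⟩ := diagNet_sLtsL_iff.1 hfire
    exact ⟨_, .diag k, eq_zero_of_isEmpty ⟨Empty.elim⟩ Y ▸ .diag⟩
  | codiag =>
    obtain ⟨k, rfl, rfl⟩ := codiagNet_sLtsL_iff.1 hfire
    exact ⟨_, .codiag k, eq_zero_of_isEmpty ⟨Empty.elim⟩ Y ▸ .codiag⟩
  | bot =>
    obtain ⟨k, rfl, rfl⟩ := botNet_sLtsL_iff.1 hfire
    exact ⟨_, .bot k, eq_zero_of_isEmpty ⟨Empty.elim⟩ Y ▸ .bot⟩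
  | top =>
    obtain ⟨k, rfl, rfl⟩ := topNet_sLtsL_iff.1 hfire
    exact ⟨_, .top k, eq_zero_of_isEmpty ⟨Empty.elim⟩ Y ▸ .top⟩
  | lam =>
    obtain ⟨h, k, rfl, rfl⟩ := lamNet_sLtsL_iff.1 hfire
    exact ⟨_, .lam h k, eq_zero_of_isEmpty ⟨Empty.elim⟩ Y ▸ .lam⟩
  | vee =>
    obtain ⟨h, k, rfl, rfl⟩ := veeNet_sLtsL_iff.1 hfire
    exact ⟨_, .vee h k, eq_zero_of_isEmpty ⟨Empty.elim⟩ Y ▸ .vee⟩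
  | down =>
    obtain ⟨rfl, rfl⟩ := downNet_sLtsL_iff.1 hfire
    exact ⟨_, .refl hC .down, eq_zero_of_isEmpty ⟨Empty.elim⟩ Y ▸ .down⟩
  | up =>
    obtain ⟨rfl, rfl⟩ := upNet_sLtsL_iff.1 hfire
    exact ⟨_, .refl hC .up, eq_zero_of_isEmpty ⟨Empty.elim⟩ Y ▸ .up⟩
  | seq => exact hC.elim
  | tens => exact hC.elim

theorem exists_step_of_sLtsL {T : TTerm} {k l : ℕ} {N : PTNet k l} {X : Multiset N.P}
    (hs : Sem T k l N X) {α β : List ℕ} {Y : Multiset N.P} (hfire : N.SLtsL X α β Y) :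
    ∃ T', Step T α β T' ∧ Sem T' k l N Y := by
  induction hs generalizing α β with
  | seq _ _ ih₁ ih₂ =>
    obtain ⟨γ, Y₁, Y₂, rfl, h₁, h₂⟩ := comp_sLtsL_iff.1 hfire
    obtain ⟨T₁, hT₁, hs₁⟩ := ih₁ h₁
    obtain ⟨T₂, hT₂, hs₂⟩ := ih₂ h₂
    exact ⟨_, .cut hT₁ hT₂, .seq hs₁ hs₂⟩
  | tens _ _ ih₁ ih₂ =>
    obtain ⟨_, _, _, _, Y₁, Y₂, rfl, rfl, rfl, h₁, h₂⟩ := tensor_sLtsL_iff.1 hfire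
    obtain ⟨T₁, hT₁, hs₁⟩ := ih₁ h₁
    obtain ⟨T₂, hT₂, hs₂⟩ := ih₂ h₂
    exact ⟨_, .ten hT₁ hT₂, .tens hs₁ hs₂⟩
  | _ => exact exists_step_of_sLtsL_of_isBasic (by trivial) (by constructor) hfire

end PTTrans

/-- Theorem `correspondence-ptfortiles`: the compositional
translation `⟦−⟧` from P/T calculus terms to P/T nets with boundaries
preserves and reflects the strong semantics. -/
theorem stmt16 :
    -- (i) term transitions are preserved
    (∀ (T T' : TTerm) (α β : List ℕ), TTerm.Step T α β T' →
       ∀ (k l : ℕ) (N : PTNet k l) (X : Multiset N.P), PTTrans.Sem T k l N X →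
         ∃ X' : Multiset N.P, PTTrans.Sem T' k l N X' ∧ PTNet.SLtsL N X α β X') ∧
    -- (ii) net transitions are reflected
    (∀ (T : TTerm) (k l : ℕ) (N : PTNet k l) (X : Multiset N.P),
       PTTrans.Sem T k l N X →
       ∀ (α β : List ℕ) (Y : Multiset N.P), PTNet.SLtsL N X α β Y →
         ∃ T' : TTerm, TTerm.Step T α β T' ∧ PTTrans.Sem T' k l N Y) :=
  ⟨fun _ _ _ _ hstep _ _ _ _ hs => PTTrans.exists_sLtsL_of_step hstep hs,
    fun _ _ _ _ _ hs _ _ _ h => PTTrans.exists_step_of_sLtsL hs h⟩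
end

section
/- Define the right amplifier !k : (1,1) for k ∈ ℕ₊ by !1 := I and !(k+1) := Δ;(!k ⊗ I);V, and the left amplifier k! : (1,1) by 1! := I and (k+1)! := Λ;(I ⊗ k!);∇. Then for all a, b ∈ ℕ, under the weak semantics of the Petri calculus: !k ⇒a/b !k if and only if b = k·a, and k! ⇒a/b k! if and only if a = k·b. -/
/-- Syntax of the Petri calculus. -/
inductive PTerm : Type
  | empty               -- ○ (empty one-place buffer)
  | full                -- ● (full one-place buffer)
  | iden                -- I
  | tw                  -- X
  | diag                -- Δ
  | codiag              -- ∇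
  | bot                 -- ⊥
  | top                 -- ⊤
  | lam                 -- Λ
  | vee                 -- V
  | down                -- ↓
  | up                  -- ↑
  | tens (P Q : PTerm)  -- ⊗
  | seq (P Q : PTerm)   -- ;
  deriving DecidableEq

namespace PTerm

/-- Sorting discipline of the Petri calculus. -/
inductive HasSort : PTerm → ℕ → ℕ → Prop
  | empty : HasSort .empty 1 1
  | full : HasSort .full 1 1
  | iden : HasSort .iden 1 1
  | tw : HasSort .tw 2 2
  | diag : HasSort .diag 1 2
  | codiag : HasSort .codiag 2 1
  | bot : HasSort .bot 1 0
  | top : HasSort .top 0 1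
  | lam : HasSort .lam 1 2
  | vee : HasSort .vee 2 1
  | down : HasSort .down 1 0
  | up : HasSort .up 0 1
  | tens {P Q : PTerm} {k l m n : ℕ} :
      HasSort P k l → HasSort Q m n → HasSort (.tens P Q) (k + m) (l + n)
  | seq {P Q : PTerm} {k n l : ℕ} :
      HasSort P k n → HasSort Q n l → HasSort (.seq P Q) k l

/-- Basic connectors are the constants of the calculus. -/
def IsBasic : PTerm → Prop
  | .tens _ _ => False
  | .seq _ _ => False
  | _ => True

/-- Stateless terms contain no buffers ○, ●. -/
def Stateless : PTerm → Prop
  | .empty => False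
  | .full => False
  | .tens P Q => Stateless P ∧ Stateless Q
  | .seq P Q => Stateless P ∧ Stateless Q
  | _ => True

/-- Strong operational semantics of the Petri calculus.  Labels are words
over ℕ (the rules only produce entries in {0,1}). -/
inductive Step : PTerm → List ℕ → List ℕ → PTerm → Prop
  | tkI : Step .empty [1] [0] .full
  | tkO : Step .full [0] [1] .empty
  | iden : Step .iden [1] [1] .iden
  | tw {a b : ℕ} : a ≤ 1 → b ≤ 1 → Step .tw [a, b] [b, a] .tw
  | bot : Step .bot [1] [] .bot
  | top : Step .top [] [1] .top
  | diag : Step .diag [1] [1, 1] .diag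
  | codiag : Step .codiag [1, 1] [1] .codiag
  | lam {a : ℕ} : a ≤ 1 → Step .lam [1] [1 - a, a] .lam
  | vee {a : ℕ} : a ≤ 1 → Step .vee [1 - a, a] [1] .vee
  | refl {C : PTerm} {k l : ℕ} : IsBasic C → HasSort C k l →
      Step C (List.replicate k 0) (List.replicate l 0) C
  | cut {P Q R S : PTerm} {α β γ : List ℕ} :
      Step P α γ Q → Step R γ β S → Step (.seq P R) α β (.seq Q S)
  | ten {P Q R S : PTerm} {α₁ α₂ β₁ β₂ : List ℕ} :
      Step P α₁ β₁ Q → Step R α₂ β₂ S →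
      Step (.tens P R) (α₁ ++ α₂) (β₁ ++ β₂) (.tens Q S)

/-- Weak operational semantics of the Petri calculus: the same rules plus the
rule (Weak) composing consecutive steps by pointwise addition of labels. -/
inductive Weak : PTerm → List ℕ → List ℕ → PTerm → Prop
  | tkI : Weak .empty [1] [0] .full
  | tkO : Weak .full [0] [1] .empty
  | iden : Weak .iden [1] [1] .iden
  | tw {a b : ℕ} : a ≤ 1 → b ≤ 1 → Weak .tw [a, b] [b, a] .tw
  | bot : Weak .bot [1] [] .bot
  | top : Weak .top [] [1] .top
  | diag : Weak .diag [1] [1, 1] .diag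
  | codiag : Weak .codiag [1, 1] [1] .codiag
  | lam {a : ℕ} : a ≤ 1 → Weak .lam [1] [1 - a, a] .lam
  | vee {a : ℕ} : a ≤ 1 → Weak .vee [1 - a, a] [1] .vee
  | refl {C : PTerm} {k l : ℕ} : IsBasic C → HasSort C k l →
      Weak C (List.replicate k 0) (List.replicate l 0) C
  | cut {P Q R S : PTerm} {α β γ : List ℕ} :
      Weak P α γ Q → Weak R γ β S → Weak (.seq P R) α β (.seq Q S)
  | ten {P Q R S : PTerm} {α₁ α₂ β₁ β₂ : List ℕ} :
      Weak P α₁ β₁ Q → Weak R α₂ β₂ S →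
      Weak (.tens P R) (α₁ ++ α₂) (β₁ ++ β₂) (.tens Q S)
  | weak {P R Q : PTerm} {α₁ α₂ β₁ β₂ : List ℕ} :
      Weak P α₁ β₁ R → Weak R α₂ β₂ Q →
      Weak P (List.zipWith (· + ·) α₁ α₂) (List.zipWith (· + ·) β₁ β₂) Q

end PTerm

namespace PTerm

/-- Right amplifier `!k : (1,1)`: `!1 = I`, `!(k+1) = Δ;(!k ⊗ I);V`. -/
def ramp : ℕ → PTerm
  | 0 => .iden
  | 1 => .iden
  | (k + 2) => .seq (.seq .diag (.tens (ramp (k + 1)) .iden)) .vee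

/-- Left amplifier `k! : (1,1)`: `1! = I`, `(k+1)! = Λ;(I ⊗ k!);∇`. -/
def lamp : ℕ → PTerm
  | 0 => .iden
  | 1 => .iden
  | (k + 2) => .seq (.seq .lam (.tens .iden (lamp (k + 1)))) .codiag

/-!
A stateless term never changes under the weak semantics, and its weak behaviour is the
relation `Flow`, read off the term compositionally by letting every wire carry a natural
number: `Δ` copies, `V` adds, `Λ` splits, `∇` merges equal flows.  Since `Flow` is closed
under pointwise addition and every basic connector realises its flows as sums of its unit
steps, `Flow` is exactly the weak semantics of stateless terms.  In `!(k+1) = Δ;(!k ⊗ I);V`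
the trigger `a` is copied, one copy becomes `k·a` by induction, and `V` outputs
`k·a + a`; dually for `(k+1)!`.
-/

def Flow : PTerm → List ℕ → List ℕ → Prop
  | .empty, _, _ => False
  | .full, _, _ => False
  | .iden, α, β => ∃ n, α = [n] ∧ β = [n]
  | .tw, α, β => ∃ m n, α = [m, n] ∧ β = [n, m]
  | .diag, α, β => ∃ n, α = [n] ∧ β = [n, n]
  | .codiag, α, β => ∃ n, α = [n, n] ∧ β = [n]
  | .bot, α, β => ∃ n, α = [n] ∧ β = []
  | .top, α, β => ∃ n, α = [] ∧ β = [n]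
  | .lam, α, β => ∃ m n, α = [m + n] ∧ β = [m, n]
  | .vee, α, β => ∃ m n, α = [m, n] ∧ β = [m + n]
  | .down, α, β => α = [0] ∧ β = []
  | .up, α, β => α = [] ∧ β = [0]
  | .tens P Q, α, β => ∃ α₁ α₂ β₁ β₂, α = α₁ ++ α₂ ∧ β = β₁ ++ β₂ ∧
      Flow P α₁ β₁ ∧ Flow Q α₂ β₂
  | .seq P Q, α, β => ∃ γ, Flow P α γ ∧ Flow Q γ β

namespace Flow

theorem length_eq {P : PTerm} {α β α' β' : List ℕ} (h : Flow P α β) (h' : Flow P α' β') :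
    α.length = α'.length ∧ β.length = β'.length := by
  induction P generalizing α β α' β' with
  | empty | full => exact h.elim
  | iden | diag | codiag | bot | top =>
    obtain ⟨n, rfl, rfl⟩ := h; obtain ⟨n', rfl, rfl⟩ := h'; simp
  | tw | lam | vee =>
    obtain ⟨m, n, rfl, rfl⟩ := h; obtain ⟨m', n', rfl, rfl⟩ := h'; simp
  | down | up => obtain ⟨rfl, rfl⟩ := h; obtain ⟨rfl, rfl⟩ := h'; simp
  | tens P Q ihP ihQ =>
    obtain ⟨α₁, α₂, β₁, β₂, rfl, rfl, hP, hQ⟩ := h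
    obtain ⟨α₁', α₂', β₁', β₂', rfl, rfl, hP', hQ'⟩ := h'
    simp [(ihP hP hP').1, (ihP hP hP').2, (ihQ hQ hQ').1, (ihQ hQ hQ').2]
  | seq P Q ihP ihQ =>
    obtain ⟨γ, hP, hQ⟩ := h
    obtain ⟨γ', hP', hQ'⟩ := h'
    exact ⟨(ihP hP hP').1, (ihQ hQ hQ').2⟩

theorem add {P : PTerm} {α β α' β' : List ℕ} (h : Flow P α β) (h' : Flow P α' β') :
    Flow P (List.zipWith (· + ·) α α') (List.zipWith (· + ·) β β') := by
  induction P generalizing α β α' β' with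
  | empty | full => exact h.elim
  | iden | diag | codiag | bot | top =>
    obtain ⟨n, rfl, rfl⟩ := h; obtain ⟨n', rfl, rfl⟩ := h'; exact ⟨n + n', rfl, rfl⟩
  | tw =>
    obtain ⟨m, n, rfl, rfl⟩ := h; obtain ⟨m', n', rfl, rfl⟩ := h'
    exact ⟨m + m', n + n', rfl, rfl⟩
  | lam =>
    obtain ⟨m, n, rfl, rfl⟩ := h; obtain ⟨m', n', rfl, rfl⟩ := h'
    exact ⟨m + m', n + n', by simp [add_add_add_comm], rfl⟩
  | vee =>
    obtain ⟨m, n, rfl, rfl⟩ := h; obtain ⟨m', n', rfl, rfl⟩ := h'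
    exact ⟨m + m', n + n', rfl, by simp [add_add_add_comm]⟩
  | down | up => obtain ⟨rfl, rfl⟩ := h; obtain ⟨rfl, rfl⟩ := h'; exact ⟨rfl, rfl⟩
  | tens P Q ihP ihQ =>
    obtain ⟨α₁, α₂, β₁, β₂, rfl, rfl, hP, hQ⟩ := h
    obtain ⟨α₁', α₂', β₁', β₂', rfl, rfl, hP', hQ'⟩ := h'
    rw [List.zipWith_append (hP.length_eq hP').1, List.zipWith_append (hP.length_eq hP').2]
    exact ⟨_, _, _, _, rfl, rfl, ihP hP hP', ihQ hQ hQ'⟩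
  | seq P Q ihP ihQ =>
    obtain ⟨γ, hP, hQ⟩ := h
    obtain ⟨γ', hP', hQ'⟩ := h'
    exact ⟨_, ihP hP hP', ihQ hQ hQ'⟩

theorem replicate_zero {C : PTerm} {k l : ℕ} (hC : IsBasic C) (hs : HasSort C k l)
    (hst : Stateless C) : Flow C (List.replicate k 0) (List.replicate l 0) := by
  cases hs <;> simp_all [Flow, IsBasic, Stateless]

end Flow

theorem Weak.flow_of_stateless {P Q : PTerm} {α β : List ℕ} (h : Weak P α β Q)
    (hP : Stateless P) : Flow P α β ∧ Q = P := by
  induction h with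
  | tkI | tkO => exact hP.elim
  | iden | bot | top | diag | codiag => exact ⟨⟨1, rfl, rfl⟩, rfl⟩
  | @tw a b => exact ⟨⟨a, b, rfl, rfl⟩, rfl⟩
  | @lam a ha => exact ⟨⟨1 - a, a, by rw [Nat.sub_add_cancel ha], rfl⟩, rfl⟩
  | @vee a ha => exact ⟨⟨1 - a, a, rfl, by rw [Nat.sub_add_cancel ha]⟩, rfl⟩
  | refl hC hs => exact ⟨Flow.replicate_zero hC hs hP, rfl⟩
  | cut _ _ ih₁ ih₂ =>
    obtain ⟨h₁, rfl⟩ := ih₁ hP.1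
    obtain ⟨h₂, rfl⟩ := ih₂ hP.2
    exact ⟨⟨_, h₁, h₂⟩, rfl⟩
  | ten _ _ ih₁ ih₂ =>
    obtain ⟨h₁, rfl⟩ := ih₁ hP.1
    obtain ⟨h₂, rfl⟩ := ih₂ hP.2
    exact ⟨⟨_, _, _, _, rfl, rfl, h₁, h₂⟩, rfl⟩
  | weak _ _ ih₁ ih₂ =>
    obtain ⟨h₁, rfl⟩ := ih₁ hP
    obtain ⟨h₂, rfl⟩ := ih₂ hP
    exact ⟨h₁.add h₂, rfl⟩

theorem Weak.map_mul_of_isBasic {C : PTerm} {α β : List ℕ} (h : Weak C α β C) (hC : IsBasic C)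
    (hs : HasSort C α.length β.length) (n : ℕ) :
    Weak C (α.map (n * ·)) (β.map (n * ·)) C := by
  induction n with
  | zero => simpa [List.map_const'] using Weak.refl hC hs
  | succ n ih =>
    simpa [List.zipWith_map_left, List.zipWith_self, add_one_mul] using ih.weak h

theorem weak_of_flow {P : PTerm} {α β : List ℕ} (h : Flow P α β) : Weak P α β P := by
  induction P generalizing α β with
  | empty | full => exact h.elim
  | iden => obtain ⟨n, rfl, rfl⟩ := h; simpa using Weak.iden.map_mul_of_isBasic trivial .iden n
  | diag => obtain ⟨n, rfl, rfl⟩ := h; simpa using Weak.diag.map_mul_of_isBasic trivial .diag n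
  | codiag =>
    obtain ⟨n, rfl, rfl⟩ := h; simpa using Weak.codiag.map_mul_of_isBasic trivial .codiag n
  | bot => obtain ⟨n, rfl, rfl⟩ := h; simpa using Weak.bot.map_mul_of_isBasic trivial .bot n
  | top => obtain ⟨n, rfl, rfl⟩ := h; simpa using Weak.top.map_mul_of_isBasic trivial .top n
  | tw =>
    obtain ⟨m, n, rfl, rfl⟩ := h
    simpa using
      ((Weak.tw (a := 1) (b := 0) le_rfl zero_le_one).map_mul_of_isBasic trivial .tw m).weak
      ((Weak.tw (a := 0) (b := 1) zero_le_one le_rfl).map_mul_of_isBasic trivial .tw n)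
  | lam =>
    obtain ⟨m, n, rfl, rfl⟩ := h
    simpa using ((Weak.lam (a := 0) zero_le_one).map_mul_of_isBasic trivial .lam m).weak
      ((Weak.lam (a := 1) le_rfl).map_mul_of_isBasic trivial .lam n)
  | vee =>
    obtain ⟨m, n, rfl, rfl⟩ := h
    simpa using ((Weak.vee (a := 0) zero_le_one).map_mul_of_isBasic trivial .vee m).weak
      ((Weak.vee (a := 1) le_rfl).map_mul_of_isBasic trivial .vee n)
  | down => obtain ⟨rfl, rfl⟩ := h; exact Weak.refl (k := 1) (l := 0) trivial .down
  | up => obtain ⟨rfl, rfl⟩ := h; exact Weak.refl (k := 0) (l := 1) trivial .up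
  | tens P Q ihP ihQ =>
    obtain ⟨α₁, α₂, β₁, β₂, rfl, rfl, hP, hQ⟩ := h
    exact (ihP hP).ten (ihQ hQ)
  | seq P Q ihP ihQ =>
    obtain ⟨γ, hP, hQ⟩ := h
    exact (ihP hP).cut (ihQ hQ)

theorem weak_self_iff_flow {P : PTerm} {α β : List ℕ} (hP : Stateless P) :
    Weak P α β P ↔ Flow P α β :=
  ⟨fun h => (h.flow_of_stateless hP).1, weak_of_flow⟩

theorem stateless_ramp (k : ℕ) : Stateless (ramp k) := by
  induction k using ramp.induct with
  | case1 | case2 => trivial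
  | case3 k ih => exact ⟨⟨trivial, ih, trivial⟩, trivial⟩

theorem stateless_lamp (k : ℕ) : Stateless (lamp k) := by
  induction k using lamp.induct with
  | case1 | case2 => trivial
  | case3 k ih => exact ⟨⟨trivial, trivial, ih⟩, trivial⟩

theorem flow_amplify_right {P : PTerm} {x y a b : ℕ} (hP : Flow P [x] [y]) :
    Flow (.seq (.seq .diag (.tens P .iden)) .vee) [a] [b] ↔
      ∃ c, Flow P [a] [c] ∧ b = c + a := by
  constructor
  · rintro ⟨_, ⟨_, ⟨n, ha, rfl⟩, ⟨α₁, _, β₁, _, hsplit, rfl, h₁, ⟨m, rfl, rfl⟩⟩⟩,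
      ⟨u, v, hγ, hb⟩⟩
    obtain ⟨p, rfl⟩ := List.length_eq_one_iff.mp (h₁.length_eq hP).1
    obtain ⟨q, rfl⟩ := List.length_eq_one_iff.mp (h₁.length_eq hP).2
    simp only [List.cons_append, List.nil_append, List.cons.injEq, and_true] at ha hsplit hγ hb
    obtain ⟨rfl, rfl⟩ := hsplit
    obtain ⟨rfl, rfl⟩ := hγ
    subst_vars
    exact ⟨_, h₁, rfl⟩
  · rintro ⟨c, hc, rfl⟩
    exact ⟨[c, a], ⟨[a, a], ⟨a, rfl, rfl⟩,
      ⟨[a], [a], [c], [a], rfl, rfl, hc, ⟨a, rfl, rfl⟩⟩⟩,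
      ⟨c, a, rfl, rfl⟩⟩

theorem flow_amplify_left {P : PTerm} {x y a b : ℕ} (hP : Flow P [x] [y]) :
    Flow (.seq (.seq .lam (.tens .iden P)) .codiag) [a] [b] ↔
      ∃ c, Flow P [c] [b] ∧ a = b + c := by
  constructor
  · rintro ⟨_, ⟨_, ⟨u, v, ha, rfl⟩, ⟨_, α₂, _, β₂, hsplit, rfl, ⟨m, rfl, rfl⟩, h₂⟩⟩,
      ⟨n, hγ, hb⟩⟩
    obtain ⟨p, rfl⟩ := List.length_eq_one_iff.mp (h₂.length_eq hP).1
    obtain ⟨q, rfl⟩ := List.length_eq_one_iff.mp (h₂.length_eq hP).2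
    simp only [List.cons_append, List.nil_append, List.cons.injEq, and_true] at ha hsplit hγ hb
    obtain ⟨rfl, rfl⟩ := hsplit
    obtain ⟨rfl, rfl⟩ := hγ
    subst_vars
    exact ⟨_, h₂, rfl⟩
  · rintro ⟨c, hc, rfl⟩
    exact ⟨[b, b], ⟨[b, c], ⟨b, c, rfl, rfl⟩,
      ⟨[b], [c], [b], [b], rfl, rfl, ⟨b, rfl, rfl⟩, hc⟩⟩,
      ⟨b, rfl, rfl⟩⟩

theorem flow_ramp (k a b : ℕ) : Flow (ramp (k + 1)) [a] [b] ↔ b = (k + 1) * a := by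
  induction k generalizing a b with
  | zero => simp [ramp, Flow, eq_comm]
  | succ k ih =>
    rw [ramp, flow_amplify_right ((ih 0 0).2 rfl)]
    simp only [ih, exists_eq_left]
    ring_nf

theorem flow_lamp (k a b : ℕ) : Flow (lamp (k + 1)) [a] [b] ↔ a = (k + 1) * b := by
  induction k generalizing a b with
  | zero => simp [lamp, Flow, eq_comm]
  | succ k ih =>
    rw [lamp, flow_amplify_left ((ih 0 0).2 rfl)]
    simp only [ih, exists_eq_left]
    ring_nf

end PTerm

/-- Lemma `amplifiers`: under the weak semantics of the
Petri calculus, the right amplifier `!k` multiplies its trigger by `k`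
(`!k ⇒a/b !k` iff `b = k·a`), and dually for the left amplifier `k!`. -/
theorem stmt18 (k : ℕ) (hk : 1 ≤ k) (a b : ℕ) :
    (PTerm.Weak (PTerm.ramp k) [a] [b] (PTerm.ramp k) ↔ b = k * a) ∧
    (PTerm.Weak (PTerm.lamp k) [a] [b] (PTerm.lamp k) ↔ a = k * b) := by
  obtain ⟨j, rfl⟩ := Nat.exists_eq_add_of_le' hk
  exact ⟨(PTerm.weak_self_iff_flow (PTerm.stateless_ramp _)).trans (PTerm.flow_ramp j a b),
    (PTerm.weak_self_iff_flow (PTerm.stateless_lamp _)).trans (PTerm.flow_lamp j a b)⟩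
end

section
/- For every finite C/E net with boundaries N : m → n with set of places P, there exists a family (T_X)_{X⊆P} of Petri calculus terms, each of sort (m, n), such that for all markings X, Y ⊆ P and all α ∈ {0,1}^m, β ∈ {0,1}^n: (i) if N_X −α/β→ N_Y in the labelled semantics of C/E nets, then T_X −α/β→ T_Y in the strong semantics of the Petri calculus; and (ii) if T_X −α/β→ Q for some term Q, then Q = T_Y for some Y ⊆ P with N_X −α/β→ N_Y. -/
/-- A C/E net with boundaries `m → n` (contention given as a plain relation;
the well-formedness conditions are collected in `CENet.Valid`). -/
structure CENet (m n : ℕ) : Type 1 where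
  P : Type
  T : Type
  pre : T → Set P
  post : T → Set P
  src : T → Set (Fin m)
  tgt : T → Set (Fin n)
  conten : T → T → Prop

namespace CENet

variable {k l m n : ℕ}

def preS (N : CENet m n) (U : Set N.T) : Set N.P := ⋃ t ∈ U, N.pre t
def postS (N : CENet m n) (U : Set N.T) : Set N.P := ⋃ t ∈ U, N.post t
def srcS (N : CENet m n) (U : Set N.T) : Set (Fin m) := ⋃ t ∈ U, N.src t
def tgtS (N : CENet m n) (U : Set N.T) : Set (Fin n) := ⋃ t ∈ U, N.tgt t

/-- A set of transitions is mutually independent when no two distinct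
members are in contention. -/
def MutInd (N : CENet m n) (U : Set N.T) : Prop :=
  ∀ t ∈ U, ∀ u ∈ U, t ≠ u → ¬ N.conten t u

/-- Well-formedness of a C/E net with boundaries: finiteness, the contention
relation is symmetric, irreflexive and contains all non-independent pairs and
all pairs sharing a boundary port, and transitions have distinct footprints. -/
def Valid (N : CENet m n) : Prop :=
  Finite N.P ∧ Finite N.T ∧
  (∀ t u : N.T, N.conten t u → N.conten u t) ∧
  (∀ t : N.T, ¬ N.conten t t) ∧
  (∀ t u : N.T, t ≠ u → (N.pre t ∩ N.pre u).Nonempty → N.conten t u) ∧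
  (∀ t u : N.T, t ≠ u → (N.post t ∩ N.post u).Nonempty → N.conten t u) ∧
  (∀ t u : N.T, t ≠ u → (N.src t ∩ N.src u).Nonempty → N.conten t u) ∧
  (∀ t u : N.T, t ≠ u → (N.tgt t ∩ N.tgt u).Nonempty → N.conten t u) ∧
  (∀ t u : N.T, N.pre t = N.pre u → N.post t = N.post u →
     N.src t = N.src u → N.tgt t = N.tgt u → t = u)

/-- C/E firing: `N_X →_U N_Y`. -/
def Fire (N : CENet m n) (X : Set N.P) (U : Set N.T) (Y : Set N.P) : Prop :=
  N.MutInd U ∧ N.preS U ⊆ X ∧ N.postS U ∩ X = ∅ ∧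
    Y = (X \ N.preS U) ∪ N.postS U

/-- Labelled semantics of C/E nets with boundaries (labels as subsets of
ports, i.e. elements of `{0,1}^m` via characteristic functions). -/
def Lts (N : CENet m n) (X : Set N.P) (α : Set (Fin m)) (β : Set (Fin n))
    (Y : Set N.P) : Prop :=
  ∃ U : Set N.T, N.Fire X U Y ∧ α = N.srcS U ∧ β = N.tgtS U

/-- Synchronisation between C/E nets with a common boundary. -/
def Synch (M : CENet l m) (N : CENet m n) (U : Set M.T) (V : Set N.T) : Prop :=
  M.MutInd U ∧ N.MutInd V ∧ ¬(U = ∅ ∧ V = ∅) ∧ M.tgtS U = N.srcS V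

/-- Minimal synchronisation. -/
def MinSynch (M : CENet l m) (N : CENet m n) (U : Set M.T) (V : Set N.T) : Prop :=
  Synch M N U V ∧
    ∀ U' V', Synch M N U' V' → U' ⊆ U → V' ⊆ V → U' = U ∧ V' = V

end CENet
open Classical in
/-- Characteristic word `χ(S) ∈ {0,1}^k` of a subset `S ⊆ Fin k`. -/
noncomputable def chiSet {k : ℕ} (S : Set (Fin k)) : List ℕ :=
  (List.finRange k).map fun i => if i ∈ S then 1 else 0

namespace CENet

/-- Labelled semantics of C/E nets with boundaries, with labels presented as
binary words (via the characteristic function `chiSet`). -/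
def LtsL {m n : ℕ} (N : CENet m n) (X : Set N.P) (a b : List ℕ)
    (Y : Set N.P) : Prop :=
  ∃ U : Set N.T, N.Fire X U Y ∧ a = chiSet (N.srcS U) ∧ b = chiSet (N.tgtS U)

end CENet


/-!
`N.toTerm X` is a bus of `m + n + 2|P|` wires: the left ports, the right ports, and for each
place a wire feeding its buffer and a wire draining it. The left ports enter the bus directly
and the other wires start at `↑`, which only carries `0`; at the far end the first `m` wires
stop at `↓`, which only accepts `0`, the next `n` are the right ports, and the rest enter the
places. Across the bus
runs one stage for every mutually independent set `U` of transitions, a chain of two-wire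
gadgets threaded by a control wire: given the control signal it consumes the signals on the
ports of `src U` and produces signals on the ports of `tgt U`, on the feeding wires of `post U`
and on the draining wires of `pre U`. The control comes from a single `⊤` and is handed on by
`Λ`s, so in a strong step at most one stage acts, and a step in which none acts is the one of
the stage of `U = ∅`. A place is a buffer whose input is its feeding wire and whose output must
equal its draining wire, so it takes a token only when empty and gives one only when full:
this is the C/E firing rule, and the strong steps of `N.toTerm X` are the labelled steps of
`N_X`.
-/

theorem Bool.toNat_inj {x y : Bool} : x.toNat = y.toNat ↔ x = y := by
  cases x <;> cases y <;> decide

open Classical in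
theorem chiSet_eq_map_toNat {k : ℕ} (S : Set (Fin k)) :
    chiSet S = ((List.finRange k).map fun i => decide (i ∈ S)).map Bool.toNat := by
  simp [chiSet, Function.comp_def, Bool.toNat, Bool.cond_decide]

theorem length_chiSet {k : ℕ} (S : Set (Fin k)) : (chiSet S).length = k := by
  simp [chiSet]

theorem chiSet_le_one {k : ℕ} (S : Set (Fin k)) : ∀ x ∈ chiSet S, x ≤ 1 := by
  simp only [chiSet, List.mem_map]
  rintro _ ⟨i, -, rfl⟩
  split <;> omega

namespace PTerm

variable {P R Q : PTerm} {a b : List ℕ} {k l : ℕ}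

@[simp] theorem step_seq_iff :
    Step (.seq P R) a b Q ↔ ∃ Q₁ Q₂ c, Q = .seq Q₁ Q₂ ∧ Step P a c Q₁ ∧ Step R c b Q₂ := by
  refine ⟨fun h => ?_, fun ⟨_, _, _, hQ, h₁, h₂⟩ => hQ ▸ .cut h₁ h₂⟩
  cases h with
  | refl hC _ => exact hC.elim
  | cut h₁ h₂ => exact ⟨_, _, _, rfl, h₁, h₂⟩

@[simp] theorem step_tens_iff :
    Step (.tens P R) a b Q ↔ ∃ Q₁ Q₂ a₁ a₂ b₁ b₂, Q = .tens Q₁ Q₂ ∧ a = a₁ ++ a₂ ∧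
      b = b₁ ++ b₂ ∧ Step P a₁ b₁ Q₁ ∧ Step R a₂ b₂ Q₂ := by
  refine ⟨fun h => ?_, fun ⟨_, _, _, _, _, _, hQ, ha, hb, h₁, h₂⟩ => hQ ▸ ha ▸ hb ▸ .ten h₁ h₂⟩
  cases h with
  | refl hC _ => exact hC.elim
  | ten h₁ h₂ => exact ⟨_, _, _, _, _, _, rfl, rfl, rfl, h₁, h₂⟩

@[simp] theorem step_empty_iff :
    Step .empty a b Q ↔ Q = .empty ∧ a = [0] ∧ b = [0] ∨ Q = .full ∧ a = [1] ∧ b = [0] := by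
  refine ⟨fun h => ?_, ?_⟩
  · cases h with
    | tkI => simp
    | refl _ hs => cases hs; simp
  · rintro (⟨rfl, rfl, rfl⟩ | ⟨rfl, rfl, rfl⟩)
    exacts [.refl (by trivial) .empty, .tkI]

@[simp] theorem step_full_iff :
    Step .full a b Q ↔ Q = .full ∧ a = [0] ∧ b = [0] ∨ Q = .empty ∧ a = [0] ∧ b = [1] := by
  refine ⟨fun h => ?_, ?_⟩
  · cases h with
    | tkO => simp
    | refl _ hs => cases hs; simp
  · rintro (⟨rfl, rfl, rfl⟩ | ⟨rfl, rfl, rfl⟩)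
    exacts [.refl (by trivial) .full, .tkO]

@[simp] theorem step_iden_iff :
    Step .iden a b Q ↔ Q = .iden ∧ ∃ x ≤ 1, a = [x] ∧ b = [x] := by
  refine ⟨fun h => ?_, ?_⟩
  · cases h with
    | iden => exact ⟨rfl, 1, le_rfl, rfl, rfl⟩
    | refl _ hs => cases hs; exact ⟨rfl, 0, zero_le_one, rfl, rfl⟩
  · rintro ⟨rfl, x, hx, rfl, rfl⟩
    obtain rfl | rfl : x = 0 ∨ x = 1 := by omega
    exacts [.refl (by trivial) .iden, .iden]

@[simp] theorem step_tw_iff :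
    Step .tw a b Q ↔ Q = .tw ∧ ∃ x ≤ 1, ∃ y ≤ 1, a = [x, y] ∧ b = [y, x] := by
  refine ⟨fun h => ?_, ?_⟩
  · cases h with
    | tw hx hy => exact ⟨rfl, _, hx, _, hy, rfl, rfl⟩
    | refl _ hs => cases hs; exact ⟨rfl, 0, zero_le_one, 0, zero_le_one, rfl, rfl⟩
  · rintro ⟨rfl, x, hx, y, hy, rfl, rfl⟩
    exact .tw hx hy

@[simp] theorem step_diag_iff :
    Step .diag a b Q ↔ Q = .diag ∧ ∃ x ≤ 1, a = [x] ∧ b = [x, x] := by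
  refine ⟨fun h => ?_, ?_⟩
  · cases h with
    | diag => exact ⟨rfl, 1, le_rfl, rfl, rfl⟩
    | refl _ hs => cases hs; exact ⟨rfl, 0, zero_le_one, rfl, rfl⟩
  · rintro ⟨rfl, x, hx, rfl, rfl⟩
    obtain rfl | rfl : x = 0 ∨ x = 1 := by omega
    exacts [.refl (by trivial) .diag, .diag]

@[simp] theorem step_codiag_iff :
    Step .codiag a b Q ↔ Q = .codiag ∧ ∃ x ≤ 1, a = [x, x] ∧ b = [x] := by
  refine ⟨fun h => ?_, ?_⟩
  · cases h with
    | codiag => exact ⟨rfl, 1, le_rfl, rfl, rfl⟩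
    | refl _ hs => cases hs; exact ⟨rfl, 0, zero_le_one, rfl, rfl⟩
  · rintro ⟨rfl, x, hx, rfl, rfl⟩
    obtain rfl | rfl : x = 0 ∨ x = 1 := by omega
    exacts [.refl (by trivial) .codiag, .codiag]

@[simp] theorem step_bot_iff :
    Step .bot a b Q ↔ Q = .bot ∧ (∃ x ≤ 1, a = [x]) ∧ b = [] := by
  refine ⟨fun h => ?_, ?_⟩
  · cases h with
    | bot => exact ⟨rfl, ⟨1, le_rfl, rfl⟩, rfl⟩
    | refl _ hs => cases hs; exact ⟨rfl, ⟨0, zero_le_one, rfl⟩, rfl⟩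
  · rintro ⟨rfl, ⟨x, hx, rfl⟩, rfl⟩
    obtain rfl | rfl : x = 0 ∨ x = 1 := by omega
    exacts [.refl (by trivial) .bot, .bot]

@[simp] theorem step_top_iff :
    Step .top a b Q ↔ Q = .top ∧ a = [] ∧ ∃ x ≤ 1, b = [x] := by
  refine ⟨fun h => ?_, ?_⟩
  · cases h with
    | top => exact ⟨rfl, rfl, 1, le_rfl, rfl⟩
    | refl _ hs => cases hs; exact ⟨rfl, rfl, 0, zero_le_one, rfl⟩
  · rintro ⟨rfl, rfl, x, hx, rfl⟩
    obtain rfl | rfl : x = 0 ∨ x = 1 := by omega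
    exacts [.refl (by trivial) .top, .top]

@[simp] theorem step_lam_iff :
    Step .lam a b Q ↔ Q = .lam ∧ ∃ x y, x + y ≤ 1 ∧ a = [x + y] ∧ b = [x, y] := by
  refine ⟨fun h => ?_, ?_⟩
  · cases h with
    | @lam y hy => exact ⟨rfl, 1 - y, y, by omega, by rw [Nat.sub_add_cancel hy], rfl⟩
    | refl _ hs => cases hs; exact ⟨rfl, 0, 0, zero_le_one, rfl, rfl⟩
  · rintro ⟨rfl, x, y, hxy, rfl, rfl⟩
    obtain ⟨rfl, rfl⟩ | ⟨rfl, rfl⟩ | ⟨rfl, rfl⟩ :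
        x = 0 ∧ y = 0 ∨ x = 1 ∧ y = 0 ∨ x = 0 ∧ y = 1 := by omega
    exacts [.refl (by trivial) .lam, .lam zero_le_one, .lam le_rfl]

@[simp] theorem step_vee_iff :
    Step .vee a b Q ↔ Q = .vee ∧ ∃ x y, x + y ≤ 1 ∧ a = [x, y] ∧ b = [x + y] := by
  refine ⟨fun h => ?_, ?_⟩
  · cases h with
    | @vee y hy => exact ⟨rfl, 1 - y, y, by omega, rfl, by rw [Nat.sub_add_cancel hy]⟩
    | refl _ hs => cases hs; exact ⟨rfl, 0, 0, zero_le_one, rfl, rfl⟩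
  · rintro ⟨rfl, x, y, hxy, rfl, rfl⟩
    obtain ⟨rfl, rfl⟩ | ⟨rfl, rfl⟩ | ⟨rfl, rfl⟩ :
        x = 0 ∧ y = 0 ∨ x = 1 ∧ y = 0 ∨ x = 0 ∧ y = 1 := by omega
    exacts [.refl (by trivial) .vee, .vee zero_le_one, .vee le_rfl]

@[simp] theorem step_down_iff : Step .down a b Q ↔ Q = .down ∧ a = [0] ∧ b = [] := by
  refine ⟨fun h => ?_, ?_⟩
  · cases h with
    | refl _ hs => cases hs; exact ⟨rfl, rfl, rfl⟩
  · rintro ⟨rfl, rfl, rfl⟩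
    exact .refl (by trivial) .down

@[simp] theorem step_up_iff : Step .up a b Q ↔ Q = .up ∧ a = [] ∧ b = [0] := by
  refine ⟨fun h => ?_, ?_⟩
  · cases h with
    | refl _ hs => cases hs; exact ⟨rfl, rfl, rfl⟩
  · rintro ⟨rfl, rfl, rfl⟩
    exact .refl (by trivial) .up

theorem HasSort.of_eq (h : HasSort P k l) {k' l' : ℕ} (hk : k = k') (hl : l = l') :
    HasSort P k' l' :=
  hk ▸ hl ▸ h

def unit : PTerm := .seq .top .bot

def idPow : ℕ → PTerm
  | 0 => unit
  | k + 1 => .tens .iden (idPow k)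

def upPow : ℕ → PTerm
  | 0 => unit
  | k + 1 => .tens .up (upPow k)

def downPow : ℕ → PTerm
  | 0 => unit
  | k + 1 => .tens .down (downPow k)

theorem hasSort_unit : HasSort unit 0 0 := .seq .top .bot

theorem hasSort_idPow : ∀ k, HasSort (idPow k) k k
  | 0 => hasSort_unit
  | k + 1 => (HasSort.tens .iden (hasSort_idPow k)).of_eq (by omega) (by omega)

theorem hasSort_upPow : ∀ k, HasSort (upPow k) 0 k
  | 0 => hasSort_unit
  | k + 1 => (HasSort.tens .up (hasSort_upPow k)).of_eq rfl (by omega)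

theorem hasSort_downPow : ∀ k, HasSort (downPow k) k 0
  | 0 => hasSort_unit
  | k + 1 => (HasSort.tens .down (hasSort_downPow k)).of_eq (by omega) rfl

@[simp] theorem step_unit_iff : Step unit a b Q ↔ Q = unit ∧ a = [] ∧ b = [] := by
  simp only [unit, step_seq_iff, step_top_iff, step_bot_iff]
  constructor
  · rintro ⟨_, _, _, rfl, ⟨rfl, rfl, _⟩, rfl, _, rfl⟩
    exact ⟨rfl, rfl, rfl⟩
  · rintro ⟨rfl, rfl, rfl⟩
    exact ⟨_, _, [0], rfl, ⟨rfl, rfl, 0, zero_le_one, rfl⟩, rfl, ⟨0, zero_le_one, rfl⟩, rfl⟩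

theorem step_idPow_iff :
    Step (idPow k) a b Q ↔ Q = idPow k ∧ b = a ∧ a.length = k ∧ ∀ x ∈ a, x ≤ 1 := by
  induction k generalizing a b Q with
  | zero => simp only [idPow, step_unit_iff]; grind
  | succ k ih =>
    cases a with
    | nil => simp [idPow]
    | cons x a => simp [idPow, ih, and_left_comm]

theorem step_upPow_iff : Step (upPow k) a b Q ↔ Q = upPow k ∧ a = [] ∧ b = List.replicate k 0 := by
  induction k generalizing a b Q with
  | zero => simp [upPow]
  | succ k ih => simp [upPow, ih, List.replicate_succ, and_comm]

theorem step_downPow_iff :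
    Step (downPow k) a b Q ↔ Q = downPow k ∧ a = List.replicate k 0 ∧ b = [] := by
  induction k generalizing a b Q with
  | zero => simp [downPow]
  | succ k ih => simp [downPow, ih, List.replicate_succ]

inductive Gadget
  | pass
  | produce
  | consume

namespace Gadget

def term : Gadget → PTerm
  | pass => .tw
  | produce => .seq (.tens .diag .iden) (.seq (.tens .iden .vee) .tw)
  | consume => .seq (.tens .iden .lam) (.seq (.tens .codiag .iden) .tw)

def Rel (s : ℕ) : Gadget → ℕ → ℕ → Prop
  | pass, w, w' => w' = w ∧ w ≤ 1
  | produce, w, w' => w' = s + w ∧ s + w ≤ 1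
  | consume, w, w' => w = s + w' ∧ s + w' ≤ 1

variable {g : Gadget} {s w w' : ℕ}

theorem rel_zero_iff : g.Rel 0 w w' ↔ w' = w ∧ w ≤ 1 := by
  cases g <;> simp only [Rel] <;> omega

theorem Rel.le_one (h : g.Rel s w w') : w ≤ 1 ∧ w' ≤ 1 := by
  cases g <;> simp only [Rel] at h <;> omega

theorem hasSort_term : ∀ g : Gadget, HasSort g.term 2 2
  | pass => .tw
  | produce => .seq (n := 3) (.tens .diag .iden) (.seq (n := 2) (.tens .iden .vee) .tw)
  | consume => .seq (n := 3) (.tens .iden .lam) (.seq (n := 2) (.tens .codiag .iden) .tw)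

theorem step_term_iff :
    Step g.term a b Q ↔
      Q = g.term ∧ ∃ s ≤ 1, ∃ w w', a = [s, w] ∧ b = [w', s] ∧ g.Rel s w w' := by
  cases g <;>
    simp only [term, Gadget.Rel, step_seq_iff, step_tens_iff, step_tw_iff, step_diag_iff,
      step_iden_iff, step_vee_iff, step_lam_iff, step_codiag_iff, exists_and_left, existsAndEq,
      List.cons_append, List.nil_append, List.cons.injEq] <;>
    grind

end Gadget

open Gadget

def BusRel (s : ℕ) : List Gadget → List ℕ → List ℕ → Prop
  | [], [], [] => True
  | g :: gs, w :: ws, w' :: ws' => g.Rel s w w' ∧ BusRel s gs ws ws'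
  | _, _, _ => False

section BusRel

variable {s : ℕ} {gs gs₁ gs₂ : List Gadget} {ws ws' ws₁ ws₂ ws₁' ws₂' : List ℕ}

@[simp] theorem busRel_nil_iff : BusRel s [] ws ws' ↔ ws = [] ∧ ws' = [] := by
  cases ws <;> cases ws' <;> simp [BusRel]

theorem BusRel.length_eq (h : BusRel s gs ws ws') :
    ws.length = gs.length ∧ ws'.length = gs.length := by
  induction gs generalizing ws ws' with
  | nil => simp_all
  | cons g gs ih =>
    cases ws <;> cases ws' <;> simp only [BusRel] at h
    simp [ih h.2]

theorem BusRel.le_one (h : BusRel s gs ws ws') : (∀ x ∈ ws, x ≤ 1) ∧ ∀ x ∈ ws', x ≤ 1 := by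
  induction gs generalizing ws ws' with
  | nil => simp_all
  | cons g gs ih =>
    cases ws <;> cases ws' <;> simp only [BusRel] at h
    obtain ⟨h₁, h₂⟩ := ih h.2
    obtain ⟨hw, hw'⟩ := h.1.le_one
    simp_all

theorem busRel_iff_eq (hgs : ∀ g ∈ gs, ∀ w w', g.Rel s w w' ↔ w' = w ∧ w ≤ 1) :
    BusRel s gs ws ws' ↔ ws' = ws ∧ ws.length = gs.length ∧ ∀ x ∈ ws, x ≤ 1 := by
  induction gs generalizing ws ws' with
  | nil => cases ws <;> cases ws' <;> simp
  | cons g gs ih =>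
    cases ws <;> cases ws' <;>
      simp [BusRel, hgs g, ih fun g' hg' => hgs g' (by simp [hg']), and_assoc, and_left_comm]

theorem busRel_zero_iff : BusRel 0 gs ws ws' ↔ ws' = ws ∧ ws.length = gs.length ∧ ∀ x ∈ ws, x ≤ 1 :=
  busRel_iff_eq fun _ _ _ _ => rel_zero_iff

theorem busRel_append_iff (h : ws₁.length = gs₁.length) (h' : ws₁'.length = gs₁.length) :
    BusRel s (gs₁ ++ gs₂) (ws₁ ++ ws₂) (ws₁' ++ ws₂') ↔
      BusRel s gs₁ ws₁ ws₁' ∧ BusRel s gs₂ ws₂ ws₂' := by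
  induction gs₁ generalizing ws₁ ws₁' with
  | nil => simp_all
  | cons g gs ih => cases ws₁ <;> cases ws₁' <;> simp_all [BusRel, and_assoc]

theorem busRel_consume_iff {bs : List Bool} (hk : bs.length = k) :
    BusRel 1 (bs.map fun b => if b then .consume else .pass) ws (List.replicate k 0) ↔
      ws = bs.map Bool.toNat := by
  subst hk
  induction bs generalizing ws with
  | nil => simp
  | cons x bs ih =>
    cases ws <;> cases x <;>
      simp +contextual [BusRel, Gadget.Rel, ih, List.replicate_succ, eq_comm (a := 0)]

theorem busRel_produce_iff {bs : List Bool} (hk : bs.length = k) :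
    BusRel 1 (bs.map fun b => if b then .produce else .pass) (List.replicate k 0) ws' ↔
      ws' = bs.map Bool.toNat := by
  subst hk
  induction bs generalizing ws' with
  | nil => simp
  | cons x bs ih => cases ws' <;> cases x <;> simp [BusRel, Gadget.Rel, ih, List.replicate_succ]

end BusRel

def thread : List Gadget → PTerm
  | [] => .bot
  | g :: gs => .seq (.tens g.term (idPow gs.length)) (.tens .iden (thread gs))

theorem hasSort_thread : ∀ gs : List Gadget, HasSort (thread gs) (gs.length + 1) gs.length
  | [] => .bot
  | g :: gs => .seq (n := gs.length + 2)
      ((HasSort.tens g.hasSort_term (hasSort_idPow _)).of_eq (by simp; omega) (by omega))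
      ((HasSort.tens .iden (hasSort_thread gs)).of_eq (by omega) (by simp; omega))

theorem step_thread_iff {gs : List Gadget} :
    Step (thread gs) a b Q ↔ Q = thread gs ∧ ∃ s ≤ 1, ∃ ws, a = s :: ws ∧ BusRel s gs ws b := by
  induction gs generalizing a b Q with
  | nil => cases b <;> simp [thread]
  | cons g gs ih =>
    simp only [thread, step_seq_iff, step_tens_iff, step_term_iff, step_idPow_iff, step_iden_iff,
      ih]
    constructor
    · rintro ⟨_, _, _, rfl, ⟨_, _, _, _, _, _, rfl, rfl, rfl, ⟨rfl, s, hs, w, w', rfl, rfl, hg⟩,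
        ⟨rfl, rfl, -, -⟩⟩, ⟨_, _, _, _, _, _, rfl, hc, rfl, ⟨rfl, x, -, rfl, rfl⟩,
        ⟨rfl, t, -, ws, rfl, hbus⟩⟩⟩
      simp only [List.cons_append, List.nil_append, List.cons.injEq] at hc
      obtain ⟨rfl, rfl, rfl⟩ := hc
      exact ⟨rfl, s, hs, w :: _, rfl, hg, hbus⟩
    · rintro ⟨rfl, s, hs, ws, rfl, hbus⟩
      obtain _ | ⟨w, ws⟩ := ws <;> obtain _ | ⟨w', b⟩ := b <;> simp only [BusRel] at hbus
      obtain ⟨hg, hbus⟩ := hbus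
      exact ⟨_, _, w' :: s :: ws, rfl,
        ⟨_, _, [s, w], ws, [w', s], ws, rfl, rfl, rfl, ⟨rfl, s, hs, w, w', rfl, rfl, hg⟩,
          ⟨rfl, rfl, hbus.length_eq.1, hbus.le_one.1⟩⟩,
        ⟨_, _, [w'], s :: ws, [w'], b, rfl, rfl, rfl, ⟨rfl, w', hg.le_one.2, rfl, rfl⟩,
          ⟨rfl, s, hs, ws, rfl, hbus⟩⟩⟩

def stage (gs : List Gadget) : PTerm :=
  .seq (.tens .lam (idPow gs.length)) (.tens .iden (thread gs))

theorem hasSort_stage (gs : List Gadget) : HasSort (stage gs) (gs.length + 1) (gs.length + 1) :=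
  .seq (n := gs.length + 2) ((HasSort.tens .lam (hasSort_idPow _)).of_eq (by omega) (by omega))
    ((HasSort.tens .iden (hasSort_thread gs)).of_eq (by omega) (by omega))

theorem step_stage_iff {gs : List Gadget} :
    Step (stage gs) a b Q ↔ Q = stage gs ∧
      ∃ c s ws ws', c + s ≤ 1 ∧ a = (c + s) :: ws ∧ b = c :: ws' ∧ BusRel s gs ws ws' := by
  simp only [stage, step_seq_iff, step_tens_iff, step_lam_iff, step_idPow_iff, step_iden_iff,
    step_thread_iff]
  constructor
  · rintro ⟨_, _, _, rfl, ⟨_, _, _, _, _, _, rfl, rfl, rfl, ⟨rfl, c, s, hcs, rfl, rfl⟩,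
      ⟨rfl, rfl, -, -⟩⟩, ⟨_, _, _, _, _, _, rfl, hd, rfl, ⟨rfl, x, -, rfl, rfl⟩,
      ⟨rfl, t, -, ws, rfl, hbus⟩⟩⟩
    simp only [List.cons_append, List.nil_append, List.cons.injEq] at hd
    obtain ⟨rfl, rfl, rfl⟩ := hd
    exact ⟨rfl, c, s, _, _, hcs, rfl, rfl, hbus⟩
  · rintro ⟨rfl, c, s, ws, ws', hcs, rfl, rfl, hbus⟩
    exact ⟨_, _, c :: s :: ws, rfl,
      ⟨_, _, [c + s], ws, [c, s], ws, rfl, rfl, rfl, ⟨rfl, c, s, hcs, rfl, rfl⟩,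
        ⟨rfl, rfl, hbus.length_eq.1, hbus.le_one.1⟩⟩,
      ⟨_, _, [c], s :: ws, [c], ws', rfl, rfl, rfl, ⟨rfl, c, by omega, rfl, rfl⟩,
        ⟨rfl, s, by omega, ws, rfl, hbus⟩⟩⟩

def pipe (k : ℕ) : List (List Gadget) → PTerm
  | [] => .tens .bot (idPow k)
  | gs :: L => .seq (stage gs) (pipe k L)

theorem hasSort_pipe {L : List (List Gadget)} (hL : ∀ gs ∈ L, gs.length = k) :
    HasSort (pipe k L) (k + 1) k := by
  induction L with
  | nil => exact (HasSort.tens .bot (hasSort_idPow k)).of_eq (by omega) (by omega)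
  | cons gs L ih =>
    have hgs : gs.length = k := hL gs (by simp)
    exact .seq (hgs ▸ hasSort_stage gs) (ih fun gs' h => hL gs' (by simp [h]))

theorem step_pipe_iff {L : List (List Gadget)} (hL : ∀ gs ∈ L, gs.length = k) {c : ℕ}
    {ws : List ℕ} :
    Step (pipe k L) (c :: ws) b Q ↔ Q = pipe k L ∧ c ≤ 1 ∧
      (b = ws ∧ ws.length = k ∧ (∀ x ∈ ws, x ≤ 1) ∨ c = 1 ∧ ∃ gs ∈ L, BusRel 1 gs ws b) := by
  induction L generalizing c ws b Q with
  | nil =>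
    simp only [pipe, step_tens_iff, step_bot_iff, step_idPow_iff, existsAndEq, List.cons_append,
      List.nil_append, List.cons.injEq, List.not_mem_nil]
    grind
  | cons gs L ih =>
    simp only [List.mem_cons, forall_eq_or_imp] at hL
    obtain ⟨hgs, hL⟩ := hL
    have ih := fun {Q b c ws} => @ih Q b hL c ws
    simp only [pipe, step_seq_iff, step_stage_iff]
    constructor
    · rintro ⟨_, _, _, rfl, ⟨rfl, c', s, ws, ws', hcs, hc, rfl, hbus⟩, hpipe⟩
      obtain ⟨rfl, rfl⟩ := List.cons.inj hc
      obtain ⟨rfl, -, hpipe⟩ := ih.1 hpipe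
      refine ⟨rfl, by omega, ?_⟩
      obtain rfl | rfl : s = 0 ∨ s = 1 := by omega
      · obtain ⟨rfl, -⟩ := busRel_zero_iff.1 hbus
        obtain hidle | ⟨hc', gs', hgs', hbus'⟩ := hpipe
        · exact Or.inl hidle
        · exact Or.inr ⟨hc', gs', List.mem_cons_of_mem _ hgs', hbus'⟩
      · obtain ⟨rfl, -, -⟩ | ⟨h, -⟩ := hpipe
        · exact Or.inr ⟨by omega, gs, List.mem_cons_self, hbus⟩
        · omega
    · rintro ⟨rfl, hc, ⟨rfl, hlen, hle⟩ | ⟨rfl, gs', hgs', hbus⟩⟩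
      · exact ⟨_, _, c :: b, rfl, ⟨rfl, c, 0, b, b, by omega, by simp, rfl,
          busRel_zero_iff.2 ⟨rfl, by omega, hle⟩⟩, ih.2 ⟨rfl, hc, Or.inl ⟨rfl, hlen, hle⟩⟩⟩
      · obtain rfl | hgs' := List.mem_cons.1 hgs'
        · exact ⟨_, _, 0 :: b, rfl, ⟨rfl, 0, 1, ws, b, le_rfl, rfl, rfl, hbus⟩,
            ih.2 ⟨rfl, zero_le_one, Or.inl ⟨rfl, by rw [hbus.length_eq.2, hgs], hbus.le_one.2⟩⟩⟩
        · have hlen := hbus.length_eq.1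
          exact ⟨_, _, 1 :: ws, rfl, ⟨rfl, 1, 0, ws, ws, le_rfl, rfl, rfl,
            busRel_zero_iff.2 ⟨rfl, by rw [hlen, hL gs' hgs', hgs], hbus.le_one.1⟩⟩,
            ih.2 ⟨rfl, le_rfl, Or.inr ⟨rfl, gs', hgs', hbus⟩⟩⟩

def choice (k : ℕ) (L : List (List Gadget)) : PTerm :=
  .seq (.tens .top (idPow k)) (pipe k L)

theorem hasSort_choice {L : List (List Gadget)} (hL : ∀ gs ∈ L, gs.length = k) :
    HasSort (choice k L) k k :=
  .seq ((HasSort.tens .top (hasSort_idPow k)).of_eq (by omega) (by omega)) (hasSort_pipe hL)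

theorem step_choice_iff {L : List (List Gadget)} (hL : ∀ gs ∈ L, gs.length = k)
    (hpass : List.replicate k .pass ∈ L) :
    Step (choice k L) a b Q ↔ Q = choice k L ∧ ∃ gs ∈ L, BusRel 1 gs a b := by
  have hidle : BusRel 1 (List.replicate k .pass) a b ↔
      b = a ∧ a.length = k ∧ ∀ x ∈ a, x ≤ 1 := by
    rw [busRel_iff_eq fun g hg _ _ => by rw [List.eq_of_mem_replicate hg]; rfl,
      List.length_replicate]
  simp only [choice, step_seq_iff, step_tens_iff, step_top_iff, step_idPow_iff]
  constructor
  · rintro ⟨_, _, _, rfl, ⟨_, _, _, _, _, _, rfl, rfl, rfl, ⟨rfl, rfl, z, -, rfl⟩,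
      ⟨rfl, rfl, hlen, hle⟩⟩, hpipe⟩
    obtain ⟨rfl, -, h⟩ := (step_pipe_iff hL).1 hpipe
    refine ⟨rfl, ?_⟩
    obtain h | ⟨-, h⟩ := h
    exacts [⟨_, hpass, hidle.2 h⟩, h]
  · rintro ⟨rfl, gs, hgs, hbus⟩
    exact ⟨_, _, 1 :: a, rfl, ⟨_, _, [], a, [1], a, rfl, rfl, rfl, ⟨rfl, rfl, 1, le_rfl, rfl⟩,
      ⟨rfl, rfl, (hL gs hgs) ▸ hbus.length_eq.1, hbus.le_one.1⟩⟩,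
      (step_pipe_iff hL).2 ⟨rfl, le_rfl, Or.inr ⟨rfl, gs, hgs, hbus⟩⟩⟩

def place (x : Bool) : PTerm :=
  .seq (.tens (if x then .full else .empty) .iden) (.seq .codiag .bot)

theorem hasSort_place (x : Bool) : HasSort (place x) 2 0 := by
  cases x
  · exact .seq (.tens .empty .iden) (.seq .codiag .bot)
  · exact .seq (.tens .full .iden) (.seq .codiag .bot)

theorem step_place_iff {x : Bool} :
    Step (place x) a b Q ↔ b = [] ∧ ∃ po pr : Bool, a = [po.toNat, pr.toNat] ∧
      (pr → x) ∧ (po → !x) ∧ Q = place (x && !pr || po) := by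
  cases x <;>
    simp only [place, step_seq_iff, step_tens_iff, step_empty_iff, step_full_iff, step_iden_iff,
      step_codiag_iff, step_bot_iff, existsAndEq, exists_and_left, List.cons_append,
      List.nil_append, List.cons.injEq, or_and_right, and_or_left, exists_or, Bool.exists_bool,
      Bool.toNat_false, Bool.toNat_true, Bool.false_eq_true, reduceIte] <;>
    grind

def row : List Bool → PTerm
  | [] => unit
  | x :: xs => .tens (place x) (row xs)

theorem hasSort_row : ∀ xs : List Bool, HasSort (row xs) (2 * xs.length) 0
  | [] => hasSort_unit
  | x :: xs => (HasSort.tens (hasSort_place x) (hasSort_row xs)).of_eq (by simp; omega) rfl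

theorem step_row_iff {ι : Type*} (l : List ι) (x po pr : ι → Bool) :
    Step (row (l.map x)) ((l.flatMap fun i => [po i, pr i]).map Bool.toNat) b Q ↔
      b = [] ∧ (∀ i ∈ l, (pr i → x i) ∧ (po i → !x i)) ∧
        Q = row (l.map fun i => x i && !pr i || po i) := by
  induction l generalizing b Q with
  | nil => simp [row, and_comm]
  | cons i l ih =>
    simp only [List.map_cons, List.flatMap_cons, row, step_tens_iff, List.cons_append,
      List.nil_append, List.mem_cons, forall_eq_or_imp]
    constructor
    · rintro ⟨_, _, _, _, _, _, rfl, ha, rfl, h₁, h₂⟩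
      obtain ⟨rfl, po', pr', rfl, hpr, hpo, rfl⟩ := step_place_iff.1 h₁
      simp only [List.cons_append, List.nil_append, List.cons.injEq, Bool.toNat_inj] at ha
      obtain ⟨rfl, rfl, rfl⟩ := ha
      obtain ⟨rfl, hl, rfl⟩ := ih.1 h₂
      exact ⟨rfl, ⟨⟨hpr, hpo⟩, hl⟩, rfl⟩
    · rintro ⟨rfl, ⟨⟨hpr, hpo⟩, hl⟩, rfl⟩
      exact ⟨_, _, [(po i).toNat, (pr i).toNat], _, [], [], rfl, rfl, rfl,
        step_place_iff.2 ⟨rfl, po i, pr i, rfl, hpr, hpo, rfl⟩, ih.2 ⟨rfl, hl, rfl⟩⟩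

end PTerm
namespace CENet

open PTerm Gadget

variable {m n : ℕ} (N : CENet m n)

theorem fire_iff {X Y : Set N.P} {U : Set N.T} :
    N.Fire X U Y ↔ N.MutInd U ∧ (∀ p, (p ∈ N.preS U → p ∈ X) ∧ (p ∈ N.postS U → p ∉ X)) ∧
      Y = (X \ N.preS U) ∪ N.postS U := by
  simp only [Fire, Set.subset_def, Set.eq_empty_iff_forall_notMem, Set.mem_inter_iff, not_and,
    forall_and, and_assoc]

section Translation

open Classical

variable [Fintype N.P]

noncomputable def places : List N.P := Finset.univ.toList

theorem mem_places (p : N.P) : p ∈ N.places := by simp [places]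

noncomputable def placeBits (U : Set N.T) : List Bool :=
  N.places.flatMap fun p => [decide (p ∈ N.postS U), decide (p ∈ N.preS U)]

theorem length_placeBits (U : Set N.T) : (N.placeBits U).length = 2 * Fintype.card N.P := by
  simp [placeBits, places, List.length_flatMap, Finset.length_toList, mul_comm]

noncomputable def gadgets (U : Set N.T) : List Gadget :=
  ((List.finRange m).map fun i => decide (i ∈ N.srcS U)).map
      (fun b => if b then .consume else .pass) ++
    (((List.finRange n).map fun j => decide (j ∈ N.tgtS U)) ++ N.placeBits U).map
      (fun b => if b then .produce else .pass)

theorem length_gadgets (U : Set N.T) :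
    (N.gadgets U).length = m + (n + 2 * Fintype.card N.P) := by
  simp [gadgets, length_placeBits]

theorem busRel_gadgets_iff {U : Set N.T} {a b ps : List ℕ} (ha : a.length = m)
    (hb : b.length = n) :
    BusRel 1 (N.gadgets U) (a ++ List.replicate (n + 2 * Fintype.card N.P) 0)
        (List.replicate m 0 ++ (b ++ ps)) ↔
      a = chiSet (N.srcS U) ∧ b = chiSet (N.tgtS U) ∧ ps = (N.placeBits U).map Bool.toNat := by
  rw [gadgets, busRel_append_iff (by simp [ha]) (by simp), busRel_consume_iff (by simp),
    busRel_produce_iff (by simp [length_placeBits]), List.map_append,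
    List.append_eq_append_iff_of_size_eq_left (by simp [hb]), chiSet_eq_map_toNat,
    chiSet_eq_map_toNat]

noncomputable def markBits (X : Set N.P) : List Bool := N.places.map fun p => decide (p ∈ X)

theorem step_row_placeBits_iff (X : Set N.P) (U : Set N.T) {b : List ℕ} {R : PTerm} :
    Step (row (N.markBits X)) ((N.placeBits U).map Bool.toNat) b R ↔
      b = [] ∧ (∀ p, (p ∈ N.preS U → p ∈ X) ∧ (p ∈ N.postS U → p ∉ X)) ∧
        R = row (N.markBits ((X \ N.preS U) ∪ N.postS U)) := by
  rw [markBits, markBits, placeBits, step_row_iff]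
  simp [N.mem_places]

variable [Fintype N.T]

noncomputable def stages : List (List Gadget) :=
  ((Finset.univ : Finset (Set N.T)).filter N.MutInd).toList.map N.gadgets

theorem mem_stages {gs : List Gadget} : gs ∈ N.stages ↔ ∃ U, N.MutInd U ∧ N.gadgets U = gs := by
  simp [stages]

theorem length_of_mem_stages {gs : List Gadget} (h : gs ∈ N.stages) :
    gs.length = m + (n + 2 * Fintype.card N.P) := by
  obtain ⟨U, -, rfl⟩ := N.mem_stages.1 h
  exact N.length_gadgets U

theorem replicate_pass_mem_stages :
    List.replicate (m + (n + 2 * Fintype.card N.P)) .pass ∈ N.stages := by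
  refine N.mem_stages.2 ⟨∅, fun t ht => ht.elim, List.eq_replicate_iff.2 ⟨N.length_gadgets ∅, ?_⟩⟩
  simp [gadgets, placeBits, srcS, tgtS, preS, postS, or_imp]

noncomputable def toTerm (X : Set N.P) : PTerm :=
  .seq (.tens (idPow m) (upPow (n + 2 * Fintype.card N.P)))
    (.seq (choice (m + (n + 2 * Fintype.card N.P)) N.stages)
      (.tens (downPow m) (.tens (idPow n) (row (N.markBits X)))))

theorem hasSort_toTerm (X : Set N.P) : HasSort (N.toTerm X) m n := by
  have hrow := hasSort_row (N.markBits X)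
  rw [markBits, List.length_map, places, Finset.length_toList, Finset.card_univ] at hrow
  exact .seq ((HasSort.tens (hasSort_idPow m) (hasSort_upPow _)).of_eq (by omega) rfl)
    (.seq (hasSort_choice fun _ => N.length_of_mem_stages)
      ((HasSort.tens (hasSort_downPow m) (HasSort.tens (hasSort_idPow n) hrow)).of_eq rfl
        (by omega)))

theorem step_toTerm_iff {X : Set N.P} {a b : List ℕ} {Q : PTerm} :
    Step (N.toTerm X) a b Q ↔ ∃ U Y, N.Fire X U Y ∧ a = chiSet (N.srcS U) ∧
      b = chiSet (N.tgtS U) ∧ Q = N.toTerm Y := by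
  simp only [toTerm, step_seq_iff, step_tens_iff, step_idPow_iff, step_upPow_iff, step_downPow_iff,
    step_choice_iff (fun _ => N.length_of_mem_stages) N.replicate_pass_mem_stages]
  constructor
  · rintro ⟨_, _, _, rfl, ⟨_, _, _, _, _, _, rfl, rfl, rfl, ⟨rfl, rfl, hlen, -⟩, ⟨rfl, rfl, rfl⟩⟩,
      _, _, _, rfl, ⟨rfl, gs, hgs, hbus⟩,
      ⟨_, _, _, _, _, _, rfl, rfl, rfl, ⟨rfl, rfl, rfl⟩,
        ⟨_, _, _, _, _, _, rfl, rfl, rfl, ⟨rfl, rfl, hblen, -⟩, hrow⟩⟩⟩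
    obtain ⟨U, hU, rfl⟩ := N.mem_stages.1 hgs
    obtain ⟨rfl, rfl, rfl⟩ := (N.busRel_gadgets_iff hlen hblen).1 hbus
    obtain ⟨rfl, hmark, rfl⟩ := (N.step_row_placeBits_iff X U).1 hrow
    exact ⟨U, _, N.fire_iff.2 ⟨hU, hmark, rfl⟩, by simp, by simp, rfl⟩
  · rintro ⟨U, Y, hfire, rfl, rfl, rfl⟩
    obtain ⟨hU, hmark, rfl⟩ := N.fire_iff.1 hfire
    have hbus :=
      (N.busRel_gadgets_iff (U := U) (length_chiSet _) (length_chiSet _)).2 ⟨rfl, rfl, rfl⟩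
    have hrow := (N.step_row_placeBits_iff X U).2 ⟨rfl, hmark, rfl⟩
    exact ⟨_, _, _, rfl, ⟨_, _, _, [], _, _, rfl, (List.append_nil _).symm, rfl,
      ⟨rfl, rfl, length_chiSet _, chiSet_le_one _⟩, ⟨rfl, rfl, rfl⟩⟩,
      _, _, _, rfl, ⟨rfl, _, N.mem_stages.2 ⟨U, hU, rfl⟩, hbus⟩,
      ⟨_, _, _, _, [], _, rfl, rfl, (List.nil_append _).symm, ⟨rfl, rfl, rfl⟩,
        ⟨_, _, _, _, _, [], rfl, rfl, (List.append_nil _).symm,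
          ⟨rfl, rfl, length_chiSet _, chiSet_le_one _⟩, hrow⟩⟩⟩

end Translation

end CENet

/-- Theorem `strongcenetstosyntax`: every finite C/E net
with boundaries `N : m → n` has a family of Petri calculus terms `(T_X)_{X⊆P}`
of sort `(m,n)` whose strong semantics preserves and reflects the labelled
semantics of the net. -/
theorem stmt19 (m n : ℕ) (N : CENet m n) (hV : N.Valid) :
    ∃ T : Set N.P → PTerm,
      (∀ X : Set N.P, PTerm.HasSort (T X) m n) ∧
      (∀ (X Y : Set N.P) (a b : List ℕ),
         CENet.LtsL N X a b Y → PTerm.Step (T X) a b (T Y)) ∧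
      (∀ (X : Set N.P) (a b : List ℕ) (Q : PTerm),
         PTerm.Step (T X) a b Q →
         ∃ Y : Set N.P, Q = T Y ∧ CENet.LtsL N X a b Y) := by
  obtain ⟨_, _, -⟩ := hV
  have := Fintype.ofFinite N.P
  have := Fintype.ofFinite N.T
  refine ⟨N.toTerm, N.hasSort_toTerm, fun X Y a b ⟨U, hfire, ha, hb⟩ =>
    N.step_toTerm_iff.2 ⟨U, Y, hfire, ha, hb, rfl⟩, fun X a b Q h => ?_⟩
  obtain ⟨U, Y, hfire, ha, hb, rfl⟩ := N.step_toTerm_iff.1 h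
  exact ⟨Y, rfl, U, hfire, ha, hb⟩
end
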